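/- arXiv:math/0404153 — 4 statements merged into one kernel-verified Lean document; each statement's English description precedes it below -/
import Mathlib

section
/- Let (X, 𝒲_n) be a numerical radius operator space, let n ≥ 1, and let f be a linear functional on M_n(X) with 𝒲*(f) ≤ 1. Then there exists a state p₀ on M_n(ℂ) such that for all r ∈ ℕ, all complex n×r matrices α, all x ∈ M_r(X), and all complex r×n matrices β: (1) |f(α x α*)| ≤ p₀(α α*) · 𝒲_r(x), and (2) |f(α x β)| ≤ 2 p₀(α α*)^{1/2} p₀(β* β)^{1/2} · 𝒲_{2r}([[0, x],[0, 0]]), where [[0,x],[0,0]] ∈ M_{2r}(X) is the block matrix with x in the upper-right r×r corner and zeros elsewhere. -/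
open scoped ComplexOrder Matrix ENNReal TensorProduct

universe u v

noncomputable section

/-- The block-diagonal sum `x ⊕ y` of two square matrices. -/
def blockDiag {X : Type*} [Zero X] {m n : ℕ} (x : Matrix (Fin m) (Fin m) X)
    (y : Matrix (Fin n) (Fin n) X) : Matrix (Fin (m + n)) (Fin (m + n)) X :=
  Matrix.submatrix (Matrix.fromBlocks x 0 0 y) finSumFinEquiv.symm finSumFinEquiv.symm

/-- The block matrix `[[0, x], [0, 0]]` with `x` in the upper-right corner. -/
def cornerBlock {X : Type*} [Zero X] {n : ℕ} (x : Matrix (Fin n) (Fin n) X) :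
    Matrix (Fin (n + n)) (Fin (n + n)) X :=
  Matrix.submatrix (Matrix.fromBlocks 0 x 0 0) finSumFinEquiv.symm finSumFinEquiv.symm

/-- Multiplication `α x` of a scalar matrix with a matrix over a ℂ-module. -/
def scalarMulLeft {X : Type*} [AddCommMonoid X] [Module ℂ X] {m n k : ℕ}
    (α : Matrix (Fin m) (Fin n) ℂ) (x : Matrix (Fin n) (Fin k) X) :
    Matrix (Fin m) (Fin k) X :=
  Matrix.of fun i j => ∑ l, α i l • x l j

/-- Multiplication `x β` of a matrix over a ℂ-module with a scalar matrix. -/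
def scalarMulRight {X : Type*} [AddCommMonoid X] [Module ℂ X] {m n k : ℕ}
    (x : Matrix (Fin m) (Fin n) X) (β : Matrix (Fin n) (Fin k) ℂ) :
    Matrix (Fin m) (Fin k) X :=
  Matrix.of fun i j => ∑ l, β l j • x i l

/-- Operator norm of a rectangular complex matrix, as an operator ℓ²(Fin n) → ℓ²(Fin m). -/
def matOpNorm {m n : ℕ} (α : Matrix (Fin m) (Fin n) ℂ) : ℝ :=
  ‖LinearMap.toContinuousLinearMap (Matrix.toEuclideanLin α)‖

/-- The numerical radius of a bounded operator on a complex inner product space. -/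
def numRadius {H : Type*} [NormedAddCommGroup H] [InnerProductSpace ℂ H]
    (a : H →L[ℂ] H) : ℝ :=
  ⨆ ξ : {ξ : H // ‖ξ‖ ≤ 1}, ‖(inner ℂ (ξ : H) (a ξ) : ℂ)‖

/-- The bounded operator `Hⁿ → Hᵐ` induced by an `m × n` matrix of bounded operators,
where `Hⁿ` carries the ℓ²-direct sum structure. -/
def matOpRect {H : Type*} [NormedAddCommGroup H] [InnerProductSpace ℂ H] {m n : ℕ}
    (a : Matrix (Fin m) (Fin n) (H →L[ℂ] H)) :
    (PiLp 2 fun _ : Fin n => H) →L[ℂ] (PiLp 2 fun _ : Fin m => H) :=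
  ((PiLp.continuousLinearEquiv 2 ℂ (fun _ : Fin m => H)).symm.toContinuousLinearMap) ∘L
    (ContinuousLinearMap.pi fun i => ∑ j, (a i j).comp (ContinuousLinearMap.proj j)) ∘L
    ((PiLp.continuousLinearEquiv 2 ℂ (fun _ : Fin n => H)).toContinuousLinearMap)

/-- The bounded operator on `Hⁿ` induced by an `n × n` matrix of bounded operators. -/
def matOp {H : Type*} [NormedAddCommGroup H] [InnerProductSpace ℂ H] {n : ℕ}
    (a : Matrix (Fin n) (Fin n) (H →L[ℂ] H)) :
    (PiLp 2 fun _ : Fin n => H) →L[ℂ] (PiLp 2 fun _ : Fin n => H) :=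
  matOpRect a

/-- The numerical radius of a complex `n × n` matrix, acting on `ℂⁿ`. -/
def matNumRadius {n : ℕ} (a : Matrix (Fin n) (Fin n) ℂ) : ℝ :=
  numRadius (LinearMap.toContinuousLinearMap (Matrix.toEuclideanLin a))

/-- The identification of `M_k(M_n(ℂ))` with `M_{kn}(ℂ)`. -/
def flatten {k n : ℕ} (x : Matrix (Fin k) (Fin k) (Matrix (Fin n) (Fin n) ℂ)) :
    Matrix (Fin (k * n)) (Fin (k * n)) ℂ :=
  Matrix.of fun i j =>
    x (finProdFinEquiv.symm i).1 (finProdFinEquiv.symm j).1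
      (finProdFinEquiv.symm i).2 (finProdFinEquiv.symm j).2

/-- An (abstract) numerical radius operator space: a complex vector space `X` together with a
norm `W n` on each matrix space `M_n(X)` satisfying the conditions (WI) and (WII). -/
structure NRNorm (X : Type u) [AddCommGroup X] [Module ℂ X] where
  W : ∀ n : ℕ, Matrix (Fin n) (Fin n) X → ℝ
  nonneg : ∀ (n : ℕ) (x : Matrix (Fin n) (Fin n) X), 0 ≤ W n x
  eq_zero_iff : ∀ (n : ℕ) (x : Matrix (Fin n) (Fin n) X), W n x = 0 ↔ x = 0
  add_le : ∀ (n : ℕ) (x y : Matrix (Fin n) (Fin n) X), W n (x + y) ≤ W n x + W n y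
  smul_eq : ∀ (n : ℕ) (c : ℂ) (x : Matrix (Fin n) (Fin n) X), W n (c • x) = ‖c‖ * W n x
  cond_WI : ∀ (m n : ℕ) (x : Matrix (Fin m) (Fin m) X) (y : Matrix (Fin n) (Fin n) X),
    W (m + n) (blockDiag x y) = max (W m x) (W n y)
  cond_WII : ∀ (m n : ℕ) (α : Matrix (Fin n) (Fin m) ℂ) (x : Matrix (Fin m) (Fin m) X),
    W n (scalarMulRight (scalarMulLeft α x) αᴴ) ≤ matOpNorm α ^ 2 * W m x

/-- An (abstract) operator space: a complex vector space `X` together with a norm `O n` on each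
matrix space `M_n(X)` satisfying Ruan's axioms (OI) and (OII). -/
structure OSNorm (X : Type u) [AddCommGroup X] [Module ℂ X] where
  O : ∀ n : ℕ, Matrix (Fin n) (Fin n) X → ℝ
  nonneg : ∀ (n : ℕ) (x : Matrix (Fin n) (Fin n) X), 0 ≤ O n x
  eq_zero_iff : ∀ (n : ℕ) (x : Matrix (Fin n) (Fin n) X), O n x = 0 ↔ x = 0
  add_le : ∀ (n : ℕ) (x y : Matrix (Fin n) (Fin n) X), O n (x + y) ≤ O n x + O n y
  smul_eq : ∀ (n : ℕ) (c : ℂ) (x : Matrix (Fin n) (Fin n) X), O n (c • x) = ‖c‖ * O n x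
  cond_OI : ∀ (m n : ℕ) (x : Matrix (Fin m) (Fin m) X) (y : Matrix (Fin n) (Fin n) X),
    O (m + n) (blockDiag x y) = max (O m x) (O n y)
  cond_OII : ∀ (m n : ℕ) (α : Matrix (Fin n) (Fin m) ℂ) (x : Matrix (Fin m) (Fin m) X)
    (β : Matrix (Fin m) (Fin n) ℂ),
    O n (scalarMulRight (scalarMulLeft α x) β) ≤ matOpNorm α * O m x * matOpNorm β

/-- The completely bounded norm (valued in `[0, ∞]`) of a linear map, with respect to given
matrix norm sequences on the domain and the codomain. -/
def cbNorm {X Y : Type*} (WX : ∀ n : ℕ, Matrix (Fin n) (Fin n) X → ℝ)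
    (WY : ∀ n : ℕ, Matrix (Fin n) (Fin n) Y → ℝ) (φ : X → Y) : ℝ≥0∞ :=
  ⨆ (n : ℕ) (x : Matrix (Fin n) (Fin n) X) (_ : WX n x ≤ 1),
    ENNReal.ofReal (WY n (x.map φ))

/-- The maximal numerical radius norm affiliated with an operator space `(X, 𝒪_n)`. -/
def Wmax {X : Type u} [AddCommGroup X] [Module ℂ X] (OS : OSNorm X)
    (n : ℕ) (x : Matrix (Fin n) (Fin n) X) : ℝ :=
  sInf {t | ∃ (r : ℕ) (a : Matrix (Fin n) (Fin r) ℂ) (y : Matrix (Fin r) (Fin r) X)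
      (b : Matrix (Fin r) (Fin n) ℂ),
    x = scalarMulRight (scalarMulLeft a y) b ∧ OS.O r y = 1 ∧
      t = (1 / 2) * matOpNorm (a * aᴴ + bᴴ * b)}

/-- A complex Hilbert space together with a linear map of `X` into its bounded operators. -/
structure HilbertRep (X : Type u) [AddCommGroup X] [Module ℂ X] where
  H : Type u
  [instN : NormedAddCommGroup H]
  [instI : InnerProductSpace ℂ H]
  [instC : CompleteSpace H]
  Φ : X →ₗ[ℂ] (H →L[ℂ] H)

attribute [instance] HilbertRep.instN HilbertRep.instI HilbertRep.instC

end

/-!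
A real-linear functional on `M_n(ℂ)` lying below the numerical abscissa
`k ↦ sup_{‖ξ‖ = 1} Re ⟪k ξ, ξ⟫` is nonnegative on positive matrices, vanishes on skew-Hermitian
ones and takes the value `1` at `1`, so its complexification is a state. The pairs
`(β βᴴ, c)` with `c ≤ Re f(β y βᴴ)` and `𝒲_r(y) ≤ 1` form a convex cone (sums via (WI) and
block matrices, positive multiples by rescaling `β`), and on it `c ≤ 𝒲_n(β y βᴴ) ≤ ‖β‖² ≤ sup Re ⟪β βᴴ ξ, ξ⟫`
by (WII). A Hahn–Banach argument therefore gives a real functional `φ` below the numerical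
abscissa with `Re f(β y βᴴ) ≤ φ(β βᴴ)` whenever `𝒲_r(y) ≤ 1`; rotating and rescaling `y` turns
this into `|f(α x αᴴ)| ≤ φ(α αᴴ) 𝒲_r(x)`. For the second estimate apply the first one to
`γ = [α, t βᴴ]`: then `γ [[0, x], [0, 0]] γᴴ = t α x β` and `γ γᴴ = α αᴴ + t² βᴴ β`, so
`t |f(α x β)| ≤ (φ(α αᴴ) + t² φ(βᴴ β)) 𝒲_{2r}([[0, x], [0, 0]])` for every real `t`, and the
discriminant of this quadratic in `t` gives the bound.
-/

open scoped InnerProductSpace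
open Matrix

noncomputable section

theorem exists_linearMap_le_of_le_on_pointedCone {E : Type*} [AddCommGroup E] [Module ℝ E]
    (q : E → ℝ) (q_smul : ∀ c : ℝ, 0 ≤ c → ∀ x, q (c • x) = c * q x)
    (q_add : ∀ x y, q (x + y) ≤ q x + q y) (D : PointedCone ℝ (E × ℝ))
    (hD : ∀ p ∈ D, p.2 ≤ q p.1) :
    ∃ φ : E →ₗ[ℝ] ℝ, (∀ x, φ x ≤ q x) ∧ ∀ p ∈ D, p.2 ≤ φ p.1 := by
  have q_zero : q 0 = 0 := by simpa using q_smul 0 le_rfl 0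
  -- The epigraph of `x ↦ inf_{(h, c) ∈ D} q (x + h) - c`; `φ` is read off a positive
  -- functional `g` on it with `g (0, 1) = 1`.
  let S : PointedCone ℝ (E × ℝ) :=
    { carrier := {p | ∃ d ∈ D, q (p.1 + d.1) ≤ p.2 + d.2}
      zero_mem' := ⟨0, D.zero_mem, by simp [q_zero]⟩
      add_mem' := by
        rintro p p' ⟨d, hd, hp⟩ ⟨d', hd', hp'⟩
        refine ⟨d + d', D.add_mem hd hd', ?_⟩
        calc q ((p + p').1 + (d + d').1) ≤ q (p.1 + d.1) + q (p'.1 + d'.1) := by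
              rw [Prod.fst_add, Prod.fst_add, add_add_add_comm]; exact q_add _ _
          _ ≤ (p + p').2 + (d + d').2 := by simp only [Prod.snd_add]; linarith
      smul_mem' := by
        rintro c p ⟨d, hd, hp⟩
        refine ⟨c • d, D.smul_mem c.2 hd, ?_⟩
        show q ((c : ℝ) • p.1 + (c : ℝ) • d.1) ≤ (c : ℝ) • p.2 + (c : ℝ) • d.2
        rw [← smul_add, ← smul_add, q_smul c c.2, smul_eq_mul]
        exact mul_le_mul_of_nonneg_left hp c.2 }
  obtain ⟨g, hg_snd, hg_nonneg⟩ := riesz_extension S (LinearPMap.snd ⊥ ⊤)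
    (by
      rintro p ⟨d, hd, hpd⟩
      rw [show (p : E × ℝ).1 = 0 from p.2.1, zero_add] at hpd
      exact (le_add_iff_nonneg_left _).mp ((hD d hd).trans hpd))
    (by
      rintro ⟨x, t⟩
      exact ⟨⟨(0, q x - t), Submodule.zero_mem _, trivial⟩, 0, D.zero_mem, by simp⟩)
  set φ := -g.comp (LinearMap.inl ℝ E ℝ)
  have hg (x : E) (t : ℝ) : g (x, t) = t - φ x := by
    have h0 : g (0, t) = t := hg_snd ⟨(0, t), Submodule.zero_mem _, trivial⟩
    rw [show (x, t) = (x, 0) + ((0, t) : E × ℝ) by simp, map_add, h0]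
    simp [φ, add_comm]
  refine ⟨φ, fun x => ?_, fun d hd => ?_⟩
  · have h := hg_nonneg (x, q x) ⟨0, D.zero_mem, by simp⟩
    rw [hg] at h
    linarith
  · have h := hg_nonneg (-d) ⟨d, hd, by simp [q_zero]⟩
    rw [map_neg, ← Prod.mk.eta (p := d), hg] at h
    linarith

theorem le_two_mul_sqrt_mul_sqrt_mul {F A B C : ℝ} (hC : 0 ≤ C)
    (h : ∀ t : ℝ, t * F ≤ (A + t ^ 2 * B) * C) : F ≤ 2 * √A * √B * C := by
  have hAC : 0 ≤ A * C := by simpa using h 0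
  have hdiscrim : discrim (B * C) (-F) (A * C) ≤ 0 :=
    discrim_le_zero fun t => by nlinarith [h t]
  have hF : F ^ 2 ≤ 4 * (A * C) * (B * C) := by rw [discrim] at hdiscrim; linarith
  calc F ≤ √(F ^ 2) := (le_abs_self F).trans_eq (Real.sqrt_sq_eq_abs F).symm
    _ ≤ √(4 * (A * C) * (B * C)) := Real.sqrt_le_sqrt hF
    _ = 2 * √A * √B * C := by
      rw [Real.sqrt_mul (by positivity), Real.sqrt_mul (by norm_num), Real.sqrt_mul' _ hC,
        Real.sqrt_mul' _ hC, show (4 : ℝ) = 2 ^ 2 by norm_num, Real.sqrt_sq zero_le_two]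
      linear_combination (2 * √A * √B) * Real.mul_self_sqrt hC

theorem Module.Dual.extendRCLike_apply_of_isSelfAdjoint {M : Type*} [AddCommGroup M]
    [Module ℝ M] [Module ℂ M] [IsScalarTower ℝ ℂ M] [StarAddMonoid M] [StarModule ℂ M]
    (φ : Module.Dual ℝ M) (hφ : ∀ k, star k = -k → φ k = 0) {k : M} (hk : IsSelfAdjoint k) :
    φ.extendRCLike k = (φ k : ℂ) := by
  have hIk : φ ((RCLike.I : ℂ) • k) = 0 :=
    hφ _ (by rw [star_smul, hk.star_eq, RCLike.star_def, RCLike.conj_I, neg_smul])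
  rw [Module.Dual.extendRCLike_apply, hIk]
  simp

section FinBlocks

variable {R : Type*} {k m r : ℕ}

def fromColsFin (β₁ : Matrix (Fin k) (Fin m) R) (β₂ : Matrix (Fin k) (Fin r) R) :
    Matrix (Fin k) (Fin (m + r)) R :=
  (fromCols β₁ β₂).submatrix id finSumFinEquiv.symm

def fromRowsFin (γ₁ : Matrix (Fin m) (Fin k) R) (γ₂ : Matrix (Fin r) (Fin k) R) :
    Matrix (Fin (m + r)) (Fin k) R :=
  (fromRows γ₁ γ₂).submatrix finSumFinEquiv.symm id

theorem conjTranspose_fromColsFin [Star R] (β₁ : Matrix (Fin k) (Fin m) R)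
    (β₂ : Matrix (Fin k) (Fin r) R) : (fromColsFin β₁ β₂)ᴴ = fromRowsFin β₁ᴴ β₂ᴴ := by
  rw [fromColsFin, fromRowsFin, conjTranspose_submatrix,
    conjTranspose_fromCols_eq_fromRows_conjTranspose]

theorem fromColsFin_mul_fromRowsFin [Semiring R] {l : ℕ} (β₁ : Matrix (Fin k) (Fin m) R)
    (β₂ : Matrix (Fin k) (Fin r) R) (γ₁ : Matrix (Fin m) (Fin l) R)
    (γ₂ : Matrix (Fin r) (Fin l) R) :
    fromColsFin β₁ β₂ * fromRowsFin γ₁ γ₂ = β₁ * γ₁ + β₂ * γ₂ := by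
  rw [fromColsFin, fromRowsFin, submatrix_mul_equiv, fromCols_mul_fromRows, submatrix_id_id]

end FinBlocks

section NumericalAbscissa

variable {ι : Type*} [Fintype ι] [DecidableEq ι]

def numericalAbscissa (k : Matrix ι ι ℂ) : ℝ :=
  ⨆ ξ : Metric.sphere (0 : EuclideanSpace ℂ ι) 1, RCLike.re ⟪toEuclideanLin k ξ, ξ⟫_ℂ

instance [Nonempty ι] : Nonempty (Metric.sphere (0 : EuclideanSpace ℂ ι) 1) :=
  (NormedSpace.sphere_nonempty.mpr zero_le_one).to_subtype

theorem re_inner_toEuclideanLin_le_numericalAbscissa (k : Matrix ι ι ℂ)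
    (ξ : Metric.sphere (0 : EuclideanSpace ℂ ι) 1) :
    RCLike.re ⟪toEuclideanLin k ξ, ξ⟫_ℂ ≤ numericalAbscissa k := by
  set T := LinearMap.toContinuousLinearMap (toEuclideanLin k)
  refine le_ciSup (f := fun ξ : Metric.sphere (0 : EuclideanSpace ℂ ι) 1 =>
    RCLike.re ⟪toEuclideanLin k ξ, ξ⟫_ℂ) ⟨‖T‖, ?_⟩ ξ
  rintro _ ⟨ζ, rfl⟩
  have hζ : ‖(ζ : EuclideanSpace ℂ ι)‖ = 1 := norm_eq_of_mem_sphere ζ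
  calc RCLike.re ⟪T ζ, ζ⟫_ℂ ≤ ‖T ζ‖ * ‖(ζ : EuclideanSpace ℂ ι)‖ := re_inner_le_norm _ _
    _ ≤ ‖T‖ * ‖(ζ : EuclideanSpace ℂ ι)‖ * ‖(ζ : EuclideanSpace ℂ ι)‖ := by
        gcongr; exact T.le_opNorm ζ
    _ = ‖T‖ := by rw [hζ, mul_one, mul_one]

theorem numericalAbscissa_add_le [Nonempty ι] (k l : Matrix ι ι ℂ) :
    numericalAbscissa (k + l) ≤ numericalAbscissa k + numericalAbscissa l :=
  ciSup_le fun ξ => by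
    simpa [inner_add_left] using add_le_add
      (re_inner_toEuclideanLin_le_numericalAbscissa k ξ)
      (re_inner_toEuclideanLin_le_numericalAbscissa l ξ)

theorem numericalAbscissa_smul {c : ℝ} (hc : 0 ≤ c) (k : Matrix ι ι ℂ) :
    numericalAbscissa (c • k) = c * numericalAbscissa k := by
  rw [numericalAbscissa, numericalAbscissa, Real.mul_iSup_of_nonneg hc]
  congr! with ξ
  rw [RCLike.real_smul_eq_coe_smul (K := ℂ), map_smul, LinearMap.smul_apply, inner_smul_left,
    RCLike.conj_ofReal, RCLike.re_ofReal_mul]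

theorem numericalAbscissa_smul_one [Nonempty ι] (c : ℝ) :
    numericalAbscissa (c • 1 : Matrix ι ι ℂ) = c := by
  have h (ξ : Metric.sphere (0 : EuclideanSpace ℂ ι) 1) :
      RCLike.re ⟪toEuclideanLin (c • 1 : Matrix ι ι ℂ) ξ, ξ⟫_ℂ = c := by
    rw [toLpLin_apply, smul_mulVec, one_mulVec, ← Complex.coe_smul, WithLp.toLp_smul,
      WithLp.toLp_ofLp, inner_smul_left, inner_self_eq_norm_sq_to_K, norm_eq_of_mem_sphere ξ]
    simp
  simp only [numericalAbscissa, h, ciSup_const]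

theorem numericalAbscissa_neg_nonpos_of_posSemidef {a : Matrix ι ι ℂ}
    (ha : a.PosSemidef) : numericalAbscissa (-a) ≤ 0 :=
  Real.iSup_nonpos fun ξ => by
    simpa [inner_neg_left] using (isPositive_toEuclideanLin_iff.mpr ha).2 ξ

theorem numericalAbscissa_nonpos_of_conjTranspose_eq_neg {k : Matrix ι ι ℂ} (hk : kᴴ = -k) :
    numericalAbscissa k ≤ 0 :=
  Real.iSup_nonpos fun ξ => by
    have h := LinearMap.adjoint_inner_right (toEuclideanLin k) ξ ξ
    rw [← toEuclideanLin_conjTranspose_eq_adjoint, hk, map_neg, LinearMap.neg_apply,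
      inner_neg_right] at h
    have h' := congrArg RCLike.re h
    rw [map_neg, inner_re_symm] at h'
    linarith

end NumericalAbscissa

theorem matOpNorm_conjTranspose {m n : ℕ} (β : Matrix (Fin m) (Fin n) ℂ) :
    matOpNorm βᴴ = matOpNorm β := by
  rw [matOpNorm, matOpNorm, toEuclideanLin_conjTranspose_eq_adjoint,
    LinearMap.adjoint_toContinuousLinearMap]
  exact ContinuousLinearMap.adjoint.norm_map _

theorem sq_matOpNorm_le_numericalAbscissa {n r : ℕ} (β : Matrix (Fin n) (Fin r) ℂ) :
    matOpNorm β ^ 2 ≤ numericalAbscissa (β * βᴴ) := by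
  have hq : 0 ≤ numericalAbscissa (β * βᴴ) := Real.iSup_nonneg fun ξ =>
    (isPositive_toEuclideanLin_iff.mpr (posSemidef_self_mul_conjTranspose β)).2 ξ
  have hnorm (ξ : EuclideanSpace ℂ (Fin n)) :
      ‖toEuclideanLin βᴴ ξ‖ ^ 2 = RCLike.re ⟪toEuclideanLin (β * βᴴ) ξ, ξ⟫_ℂ := by
    have hadj : toEuclideanLin β = LinearMap.adjoint (toEuclideanLin βᴴ) := by
      rw [← toEuclideanLin_conjTranspose_eq_adjoint, conjTranspose_conjTranspose]
    simp only [toLpLin_mul_same, LinearMap.comp_apply]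
    rw [hadj, LinearMap.adjoint_inner_left, inner_self_eq_norm_sq]
  have hle : matOpNorm βᴴ ≤ √(numericalAbscissa (β * βᴴ)) :=
    ContinuousLinearMap.opNorm_le_of_unit_norm (Real.sqrt_nonneg _) fun ξ hξ =>
      Real.le_sqrt_of_sq_le <| (hnorm ξ).trans_le <|
        re_inner_toEuclideanLin_le_numericalAbscissa _ ⟨ξ, mem_sphere_zero_iff_norm.mpr hξ⟩
  calc matOpNorm β ^ 2 = matOpNorm βᴴ ^ 2 := by rw [matOpNorm_conjTranspose]
    _ ≤ √(numericalAbscissa (β * βᴴ)) ^ 2 := pow_le_pow_left₀ (norm_nonneg _) hle 2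
    _ = numericalAbscissa (β * βᴴ) := Real.sq_sqrt hq

section State

variable {ι : Type*} [Fintype ι] [DecidableEq ι] {φ : Matrix ι ι ℂ →ₗ[ℝ] ℝ}

theorem map_nonneg_of_le_numericalAbscissa (hφ : ∀ k, φ k ≤ numericalAbscissa k)
    {a : Matrix ι ι ℂ} (ha : a.PosSemidef) : 0 ≤ φ a := by
  have h := (hφ (-a)).trans (numericalAbscissa_neg_nonpos_of_posSemidef ha)
  rw [map_neg] at h
  linarith

theorem map_eq_zero_of_le_numericalAbscissa (hφ : ∀ k, φ k ≤ numericalAbscissa k)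
    {k : Matrix ι ι ℂ} (hk : kᴴ = -k) : φ k = 0 := by
  have h₁ := (hφ k).trans (numericalAbscissa_nonpos_of_conjTranspose_eq_neg hk)
  have h₂ := (hφ (-k)).trans
    (numericalAbscissa_nonpos_of_conjTranspose_eq_neg (by rw [conjTranspose_neg, hk]))
  rw [map_neg] at h₂
  linarith

theorem map_one_of_le_numericalAbscissa [Nonempty ι] (hφ : ∀ k, φ k ≤ numericalAbscissa k) :
    φ 1 = 1 := by
  have h₁ := hφ ((1 : ℝ) • 1)
  have h₂ := hφ ((-1 : ℝ) • 1)
  rw [numericalAbscissa_smul_one, one_smul] at h₁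
  rw [numericalAbscissa_smul_one, neg_one_smul, map_neg] at h₂
  linarith

theorem exists_state_of_le_numericalAbscissa [Nonempty ι]
    (hφ : ∀ k, φ k ≤ numericalAbscissa k) :
    ∃ p₀ : Matrix ι ι ℂ →ₗ[ℂ] ℂ, (∀ a : Matrix ι ι ℂ, a.PosSemidef → 0 ≤ p₀ a) ∧ p₀ 1 = 1 ∧
      ∀ a : Matrix ι ι ℂ, a.IsHermitian → p₀ a = φ a := by
  have hp₀ (a : Matrix ι ι ℂ) (ha : a.IsHermitian) : Module.Dual.extendRCLike φ a = (φ a : ℂ) :=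
    Module.Dual.extendRCLike_apply_of_isSelfAdjoint φ
      (fun k hk => map_eq_zero_of_le_numericalAbscissa hφ hk) ha
  refine ⟨Module.Dual.extendRCLike φ, fun a ha => ?_, ?_, hp₀⟩
  · rw [hp₀ a ha.isHermitian]
    exact_mod_cast map_nonneg_of_le_numericalAbscissa hφ ha
  · rw [hp₀ 1 isHermitian_one, map_one_of_le_numericalAbscissa hφ, Complex.ofReal_one]

end State

section Compress

variable {X : Type u} [AddCommGroup X] [Module ℂ X] {n r : ℕ}

def compress (α : Matrix (Fin n) (Fin r) ℂ) (β : Matrix (Fin r) (Fin n) ℂ) :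
    Matrix (Fin r) (Fin r) X →ₗ[ℂ] Matrix (Fin n) (Fin n) X where
  toFun x := scalarMulRight (scalarMulLeft α x) β
  map_add' x y := by
    ext i j
    simp [scalarMulLeft, scalarMulRight, smul_add, Finset.sum_add_distrib]
  map_smul' c x := by
    ext i j
    simp [scalarMulLeft, scalarMulRight, Finset.smul_sum, smul_comm c]

theorem compress_apply (α : Matrix (Fin n) (Fin r) ℂ) (β : Matrix (Fin r) (Fin n) ℂ)
    (x : Matrix (Fin r) (Fin r) X) : compress α β x = scalarMulRight (scalarMulLeft α x) β :=
  rfl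

theorem compress_smul_left (c : ℂ) (α : Matrix (Fin n) (Fin r) ℂ)
    (β : Matrix (Fin r) (Fin n) ℂ) :
    (compress (c • α) β : Matrix (Fin r) (Fin r) X →ₗ[ℂ] _) = c • compress α β := by
  ext x i j
  simp [compress_apply, scalarMulLeft, scalarMulRight, Finset.smul_sum, mul_smul, smul_comm c]

theorem compress_smul_right (c : ℂ) (α : Matrix (Fin n) (Fin r) ℂ)
    (β : Matrix (Fin r) (Fin n) ℂ) :
    (compress α (c • β) : Matrix (Fin r) (Fin r) X →ₗ[ℂ] _) = c • compress α β := by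
  ext x i j
  simp [compress_apply, scalarMulLeft, scalarMulRight, Finset.smul_sum, mul_smul]

theorem compress_blockDiag {m : ℕ} (β₁ : Matrix (Fin n) (Fin m) ℂ)
    (β₂ : Matrix (Fin n) (Fin r) ℂ) (γ₁ : Matrix (Fin m) (Fin n) ℂ) (γ₂ : Matrix (Fin r) (Fin n) ℂ)
    (x₁ : Matrix (Fin m) (Fin m) X) (x₂ : Matrix (Fin r) (Fin r) X) :
    compress (fromColsFin β₁ β₂) (fromRowsFin γ₁ γ₂) (blockDiag x₁ x₂) =
      compress β₁ γ₁ x₁ + compress β₂ γ₂ x₂ := by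
  ext i j
  simp [compress_apply, scalarMulLeft, scalarMulRight, fromColsFin, fromRowsFin,
    _root_.blockDiag, Fin.sum_univ_add, Finset.sum_add_distrib, smul_add]

theorem compress_cornerBlock (β₁ β₂ : Matrix (Fin n) (Fin r) ℂ)
    (γ₁ γ₂ : Matrix (Fin r) (Fin n) ℂ) (x : Matrix (Fin r) (Fin r) X) :
    compress (fromColsFin β₁ β₂) (fromRowsFin γ₁ γ₂) (cornerBlock x) = compress β₁ γ₂ x := by
  ext i j
  simp [compress_apply, scalarMulLeft, scalarMulRight, fromColsFin, fromRowsFin, cornerBlock,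
    Fin.sum_univ_add, Finset.sum_add_distrib, smul_add, -Fin.natAdd_eq_addNat]

end Compress

namespace NRNorm

variable {X : Type u} [AddCommGroup X] [Module ℂ X] (W : NRNorm X)

theorem norm_apply_le_mul_of_re_le {r : ℕ} (g : Matrix (Fin r) (Fin r) X →ₗ[ℂ] ℂ) {C : ℝ}
    (hg : ∀ y, W.W r y ≤ 1 → (g y).re ≤ C) (x : Matrix (Fin r) (Fin r) X) :
    ‖g x‖ ≤ C * W.W r x := by
  rcases (W.nonneg r x).eq_or_lt with hx | hx
  · rw [← hx, (W.eq_zero_iff r x).mp hx.symm, map_zero, norm_zero, mul_zero]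
  set θ : ℂ := (starRingEnd ℂ) (g x) / ‖g x‖
  have hθ : ‖θ‖ ≤ 1 := by
    rw [norm_div, Complex.norm_conj, Complex.norm_real, norm_norm]
    exact div_self_le_one _
  have hθg : θ * g x = ‖g x‖ := by
    rcases eq_or_ne (g x) 0 with h0 | h0
    · simp [h0]
    · rw [div_mul_eq_mul_div, Complex.conj_mul', sq,
        mul_div_cancel_right₀ _ (by exact_mod_cast norm_ne_zero_iff.mpr h0)]
  have hy : W.W r ((θ / W.W r x) • x) ≤ 1 := by
    rw [W.smul_eq, norm_div, Complex.norm_real, Real.norm_of_nonneg hx.le,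
      div_mul_cancel₀ _ hx.ne']
    exact hθ
  have hgy := hg _ hy
  rwa [map_smul, smul_eq_mul, div_mul_eq_mul_div, hθg, ← Complex.ofReal_div,
    Complex.ofReal_re, div_le_iff₀ hx] at hgy

theorem norm_apply_le {n : ℕ} {f : Matrix (Fin n) (Fin n) X →ₗ[ℂ] ℂ}
    (hf : ∀ x : Matrix (Fin n) (Fin n) X, W.W n x ≤ 1 → ‖f x‖ ≤ 1)
    (x : Matrix (Fin n) (Fin n) X) : ‖f x‖ ≤ W.W n x := by
  simpa using W.norm_apply_le_mul_of_re_le f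
    (fun y hy => (Complex.re_le_norm _).trans (hf y hy)) x

def compressionCone {n : ℕ} (f : Matrix (Fin n) (Fin n) X →ₗ[ℂ] ℂ) :
    PointedCone ℝ (Matrix (Fin n) (Fin n) ℂ × ℝ) where
  carrier := {p | ∃ (r : ℕ) (β : Matrix (Fin n) (Fin r) ℂ) (y : Matrix (Fin r) (Fin r) X),
    W.W r y ≤ 1 ∧ p.1 = β * βᴴ ∧ p.2 ≤ (f (compress β βᴴ y)).re}
  zero_mem' := ⟨0, 0, 0, ((W.eq_zero_iff 0 0).mpr rfl).trans_le zero_le_one, by simp, by simp⟩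
  add_mem' := by
    rintro ⟨_, c₁⟩ ⟨_, c₂⟩ ⟨r₁, β₁, y₁, hy₁, rfl, hc₁⟩ ⟨r₂, β₂, y₂, hy₂, rfl, hc₂⟩
    refine ⟨r₁ + r₂, fromColsFin β₁ β₂, blockDiag y₁ y₂, ?_, ?_, ?_⟩
    · rw [W.cond_WI]
      exact max_le hy₁ hy₂
    · rw [conjTranspose_fromColsFin, fromColsFin_mul_fromRowsFin]
      rfl
    · rw [conjTranspose_fromColsFin, compress_blockDiag, map_add, Complex.add_re]
      exact add_le_add hc₁ hc₂
  smul_mem' := by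
    rintro c ⟨_, d⟩ ⟨r, β, y, hy, rfl, hd⟩
    have hβ : ((√(c : ℝ) : ℂ) • β)ᴴ = (√(c : ℝ) : ℂ) • βᴴ := by simp [conjTranspose_smul]
    have hc : (√(c : ℝ) : ℂ) * (√(c : ℝ) : ℂ) = ((c : ℝ) : ℂ) := by
      rw [← Complex.ofReal_mul, Real.mul_self_sqrt c.2]
    refine ⟨r, (√(c : ℝ) : ℂ) • β, y, hy, ?_, ?_⟩
    · show (c : ℝ) • (β * βᴴ) = _
      rw [hβ, Matrix.smul_mul, Matrix.mul_smul, smul_smul, hc, Complex.coe_smul]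
    · show (c : ℝ) * d ≤ _
      rw [hβ, compress_smul_left, compress_smul_right, LinearMap.smul_apply,
        LinearMap.smul_apply, smul_smul, hc, map_smul, smul_eq_mul, Complex.re_ofReal_mul]
      exact mul_le_mul_of_nonneg_left hd c.2

theorem snd_le_numericalAbscissa_fst {n : ℕ} {f : Matrix (Fin n) (Fin n) X →ₗ[ℂ] ℂ}
    (hf : ∀ x : Matrix (Fin n) (Fin n) X, W.W n x ≤ 1 → ‖f x‖ ≤ 1)
    {p : Matrix (Fin n) (Fin n) ℂ × ℝ} (hp : p ∈ W.compressionCone f) :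
    p.2 ≤ numericalAbscissa p.1 := by
  obtain ⟨r, β, y, hy, hp₁, hc⟩ := hp
  rw [hp₁]
  calc p.2 ≤ (f (compress β βᴴ y)).re := hc
    _ ≤ ‖f (compress β βᴴ y)‖ := Complex.re_le_norm _
    _ ≤ W.W n (compress β βᴴ y) := W.norm_apply_le hf _
    _ ≤ matOpNorm β ^ 2 * W.W r y := W.cond_WII r n β y
    _ ≤ matOpNorm β ^ 2 := mul_le_of_le_one_right (sq_nonneg _) hy
    _ ≤ numericalAbscissa (β * βᴴ) := sq_matOpNorm_le_numericalAbscissa β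

variable {n : ℕ} {f : Matrix (Fin n) (Fin n) X →ₗ[ℂ] ℂ} {φ : Matrix (Fin n) (Fin n) ℂ →ₗ[ℝ] ℝ}

theorem norm_compress_le (hφ : ∀ p ∈ W.compressionCone f, p.2 ≤ φ p.1) {r : ℕ}
    (α : Matrix (Fin n) (Fin r) ℂ) (x : Matrix (Fin r) (Fin r) X) :
    ‖f (compress α αᴴ x)‖ ≤ φ (α * αᴴ) * W.W r x :=
  W.norm_apply_le_mul_of_re_le (f ∘ₗ compress α αᴴ)
    (fun y hy => hφ (α * αᴴ, _) ⟨r, α, y, hy, rfl, le_rfl⟩) x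

theorem norm_compress_le_cornerBlock (hφ : ∀ p ∈ W.compressionCone f, p.2 ≤ φ p.1) {r : ℕ}
    (α : Matrix (Fin n) (Fin r) ℂ) (x : Matrix (Fin r) (Fin r) X)
    (β : Matrix (Fin r) (Fin n) ℂ) :
    ‖f (compress α β x)‖ ≤
      2 * √(φ (α * αᴴ)) * √(φ (βᴴ * β)) * W.W (r + r) (cornerBlock x) := by
  refine le_two_mul_sqrt_mul_sqrt_mul (W.nonneg _ _) fun t => ?_
  set γ := fromColsFin α ((t : ℂ) • βᴴ)
  have hγ : γᴴ = fromRowsFin αᴴ ((t : ℂ) • β) := by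
    simp [γ, conjTranspose_fromColsFin, conjTranspose_smul]
  calc t * ‖f (compress α β x)‖ ≤ ‖f (compress γ γᴴ (cornerBlock x))‖ := by
        rw [hγ, compress_cornerBlock, compress_smul_right, LinearMap.smul_apply, map_smul,
          norm_smul, Complex.norm_real, Real.norm_eq_abs]
        exact mul_le_mul_of_nonneg_right (le_abs_self t) (norm_nonneg _)
    _ ≤ φ (γ * γᴴ) * W.W (r + r) (cornerBlock x) := W.norm_compress_le hφ γ _
    _ = (φ (α * αᴴ) + t ^ 2 * φ (βᴴ * β)) * W.W (r + r) (cornerBlock x) := by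
        rw [hγ, fromColsFin_mul_fromRowsFin, Matrix.smul_mul, Matrix.mul_smul, smul_smul,
          ← Complex.ofReal_mul, Complex.coe_smul, map_add, map_smul, smul_eq_mul, sq]

end NRNorm

end

/-- Lemma 2.2: if `f` is a functional on `M_n(X)` with `𝒲*(f) ≤ 1`, then there is a
state `p₀` on `M_n(ℂ)` with `|f(α x α*)| ≤ p₀(α α*) 𝒲_r(x)` and
`|f(α x β)| ≤ 2 p₀(α α*)^{1/2} p₀(β* β)^{1/2} 𝒲_{2r}([[0,x],[0,0]])`. -/
theorem stmt_1 {X : Type u} [AddCommGroup X] [Module ℂ X] (W : NRNorm X)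
    (n : ℕ) (hn : 1 ≤ n) (f : Matrix (Fin n) (Fin n) X →ₗ[ℂ] ℂ)
    (hf : ∀ x : Matrix (Fin n) (Fin n) X, W.W n x ≤ 1 → ‖f x‖ ≤ 1) :
    ∃ p₀ : Matrix (Fin n) (Fin n) ℂ →ₗ[ℂ] ℂ,
      (∀ a : Matrix (Fin n) (Fin n) ℂ, a.PosSemidef → 0 ≤ p₀ a) ∧ p₀ 1 = 1 ∧
      (∀ (r : ℕ) (α : Matrix (Fin n) (Fin r) ℂ) (x : Matrix (Fin r) (Fin r) X),
        ‖f (scalarMulRight (scalarMulLeft α x) αᴴ)‖ ≤ (p₀ (α * αᴴ)).re * W.W r x) ∧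
      (∀ (r : ℕ) (α : Matrix (Fin n) (Fin r) ℂ) (x : Matrix (Fin r) (Fin r) X)
        (β : Matrix (Fin r) (Fin n) ℂ),
        ‖f (scalarMulRight (scalarMulLeft α x) β)‖ ≤
          2 * Real.sqrt ((p₀ (α * αᴴ)).re) * Real.sqrt ((p₀ (βᴴ * β)).re) *
            W.W (r + r) (cornerBlock x)) := by
  have : NeZero n := NeZero.of_pos hn
  obtain ⟨φ, hφq, hφ⟩ := exists_linearMap_le_of_le_on_pointedCone numericalAbscissa
    (fun _ hc k => numericalAbscissa_smul hc k) numericalAbscissa_add_le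
    (W.compressionCone f) (fun _ hp => W.snd_le_numericalAbscissa_fst hf hp)
  obtain ⟨p₀, hp₀_nonneg, hp₀_one, hp₀φ⟩ := exists_state_of_le_numericalAbscissa hφq
  have hre (a : Matrix (Fin n) (Fin n) ℂ) (ha : a.IsHermitian) : (p₀ a).re = φ a := by
    rw [hp₀φ a ha, Complex.ofReal_re]
  refine ⟨p₀, hp₀_nonneg, hp₀_one, fun r α x => ?_, fun r α x β => ?_⟩
  · rw [hre _ (isHermitian_mul_conjTranspose_self α)]
    exact W.norm_compress_le hφ α x
  · rw [hre _ (isHermitian_mul_conjTranspose_self α), hre _ (isHermitian_conjTranspose_mul_self β)]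
    exact W.norm_compress_le_cornerBlock hφ α x β
end

section
/- Let (X, 𝒲_n) be a numerical radius operator space and let φ : X → M_n(ℂ) be a linear map, where for each k the matrix space M_k(M_n(ℂ)) is identified with M_{kn}(ℂ) and equipped with the numerical radius norm w. Then 𝒲(φ)_cb = 𝒲(φ_n); that is, the 𝒲-completely bounded norm of φ is attained at level n. -/
open scoped ComplexOrder Matrix ENNReal TensorProduct

universe u v

/-!
Write a unit vector `ξ ∈ ℂᵏ ⊗ ℂⁿ` as a `k × n` matrix `M` and factor `M = α η` with `‖α‖ ≤ 1`
and `ηᴴ η = Mᴴ M` (diagonalise `Mᴴ M`). Then `η` is a unit vector of `ℂⁿ ⊗ ℂⁿ` and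
`⟪ξ, φₖ(x) ξ⟫ = ⟪η, φₙ(α* x α) η⟫`, while (WII) gives `𝒲ₙ(α* x α) ≤ ‖α‖² 𝒲ₖ(x) ≤ 1`.
-/

section NumericalRadius

variable {H : Type*} [NormedAddCommGroup H] [InnerProductSpace ℂ H]

lemma numRadius_bddAbove (a : H →L[ℂ] H) :
    BddAbove (Set.range fun ξ : {ξ : H // ‖ξ‖ ≤ 1} => ‖(inner ℂ (ξ : H) (a ξ) : ℂ)‖) := by
  refine ⟨‖a‖, Set.forall_mem_range.2 fun ξ => ?_⟩
  calc ‖(inner ℂ (ξ : H) (a ξ) : ℂ)‖ ≤ ‖(ξ : H)‖ * (‖a‖ * ‖(ξ : H)‖) :=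
        (norm_inner_le_norm _ _).trans (by gcongr; exact a.le_opNorm _)
    _ ≤ 1 * (‖a‖ * 1) := by gcongr <;> exact ξ.2
    _ = ‖a‖ := by ring

lemma norm_inner_le_numRadius (a : H →L[ℂ] H) {v : H} (hv : ‖v‖ ≤ 1) :
    ‖(inner ℂ v (a v) : ℂ)‖ ≤ numRadius a :=
  le_ciSup (numRadius_bddAbove a) ⟨v, hv⟩

lemma ofReal_numRadius_le {a : H →L[ℂ] H} {c : ℝ≥0∞}
    (h : ∀ v : H, ‖v‖ ≤ 1 → ENNReal.ofReal ‖(inner ℂ v (a v) : ℂ)‖ ≤ c) :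
    ENNReal.ofReal (numRadius a) ≤ c := by
  have : Nonempty {ξ : H // ‖ξ‖ ≤ 1} := ⟨⟨0, by simp⟩⟩
  rw [numRadius, Monotone.map_ciSup_of_continuousAt ENNReal.continuous_ofReal.continuousAt
    ENNReal.ofReal_mono (numRadius_bddAbove a)]
  exact iSup_le fun ξ => h ξ ξ.2

end NumericalRadius

section QuadraticForm

open Matrix

variable {ι κ : Type*} [Fintype ι] [Fintype κ]

lemma inner_toEuclideanLin_self [DecidableEq ι] (A : Matrix ι ι ℂ) (v : EuclideanSpace ℂ ι) :
    (inner ℂ v (toEuclideanLin A v) : ℂ) = star (WithLp.ofLp v) ⬝ᵥ A *ᵥ WithLp.ofLp v := by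
  rw [EuclideanSpace.inner_eq_star_dotProduct, toLpLin_apply, dotProduct_comm]

lemma ofReal_norm_toLp_sq (v : ι → ℂ) :
    ((‖WithLp.toLp 2 v‖ ^ 2 : ℝ) : ℂ) = star v ⬝ᵥ v := by
  have h := inner_self_eq_norm_sq_to_K (𝕜 := ℂ) (WithLp.toLp 2 v)
  rw [EuclideanSpace.inner_toLp_toLp, dotProduct_comm] at h
  exact_mod_cast h.symm

lemma norm_toLp_comp_equiv (e : κ ≃ ι) (v : ι → ℂ) :
    ‖WithLp.toLp 2 (v ∘ e)‖ = ‖WithLp.toLp 2 v‖ := by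
  simp only [EuclideanSpace.norm_eq, Function.comp_apply]
  rw [e.sum_comp (fun i => ‖v i‖ ^ 2)]

lemma star_mulVec_dotProduct_mulVec {R m : Type*} [CommSemiring R] [StarRing R] [Fintype m]
    (A : Matrix ι m R) (C : Matrix ι ι R) (v : m → R) :
    star (A *ᵥ v) ⬝ᵥ C *ᵥ (A *ᵥ v) = star v ⬝ᵥ (Aᴴ * C * A) *ᵥ v := by
  rw [star_mulVec, ← dotProduct_mulVec, mulVec_mulVec, mulVec_mulVec, Matrix.mul_assoc]

lemma star_vec_transpose_dotProduct {R m : Type*} [CommSemiring R] [StarRing R] [Fintype m]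
    (A : Matrix m ι R) : star (vec Aᵀ) ⬝ᵥ vec Aᵀ = (Aᴴ * A).trace := by
  rw [star_vec_dotProduct_vec, ← trace_transpose, transpose_mul, transpose_transpose,
    trace_mul_comm]
  rfl

lemma norm_toLp_vec_transpose_eq {m : Type*} [Fintype m] {A : Matrix m ι ℂ} {B : Matrix κ ι ℂ}
    (h : Aᴴ * A = Bᴴ * B) : ‖WithLp.toLp 2 (vec Aᵀ)‖ = ‖WithLp.toLp 2 (vec Bᵀ)‖ := by
  have hsq :
      ((‖WithLp.toLp 2 (vec Aᵀ)‖ ^ 2 : ℝ) : ℂ) = ((‖WithLp.toLp 2 (vec Bᵀ)‖ ^ 2 : ℝ) : ℂ) := by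
    rw [ofReal_norm_toLp_sq, ofReal_norm_toLp_sq, star_vec_transpose_dotProduct,
      star_vec_transpose_dotProduct, h]
  exact (pow_left_inj₀ (norm_nonneg _) (norm_nonneg _) two_ne_zero).mp
    (Complex.ofReal_injective hsq)

end QuadraticForm

namespace Matrix

open scoped Matrix.Norms.L2Operator

variable {𝕜 m n : Type*} [RCLike 𝕜] [Fintype m] [Fintype n] [DecidableEq n]

lemma conjTranspose_mul_diagonal_mul_mul_diagonal {B : Matrix m n 𝕜} {d : n → 𝕜}
    (hB : Bᴴ * B = diagonal (star d * d)) (c : n → 𝕜) :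
    (B * diagonal c)ᴴ * (B * diagonal c) = diagonal (star (d * c) * (d * c)) := by
  rw [conjTranspose_mul, diagonal_conjTranspose, Matrix.mul_assoc, ← Matrix.mul_assoc Bᴴ, hB,
    ← Matrix.mul_assoc, diagonal_mul_diagonal, diagonal_mul_diagonal]
  congr 1
  ext r
  simp only [Pi.mul_apply, Pi.star_apply, star_mul']
  ring

-- The columns of `B` where `d` vanishes are zero, so the junk value `0⁻¹ = 0` does no harm.
lemma mul_diagonal_inv_mul_self {B : Matrix m n 𝕜} {d : n → 𝕜}
    (hB : Bᴴ * B = diagonal (star d * d)) : B * diagonal (d⁻¹ * d) = B := by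
  have hd : d * (1 - d⁻¹ * d) = 0 := by
    ext r
    simp only [Pi.mul_apply, Pi.sub_apply, Pi.one_apply, Pi.inv_apply, Pi.zero_apply]
    rw [mul_sub, mul_one, ← mul_assoc, mul_inv_mul_cancel, sub_self]
  have hker : B * diagonal (1 - d⁻¹ * d) = 0 := by
    rw [← conjTranspose_mul_self_eq_zero, conjTranspose_mul_diagonal_mul_mul_diagonal hB, hd,
      mul_zero]
    exact diagonal_zero
  rwa [show diagonal (1 - d⁻¹ * d) = 1 - diagonal (d⁻¹ * d) by
    rw [← diagonal_one']; exact (diagonal_sub _ _).symm, Matrix.mul_sub, Matrix.mul_one,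
    sub_eq_zero, eq_comm] at hker

lemma l2_opNorm_mul_diagonal_inv_le_one {B : Matrix m n 𝕜} {d : n → 𝕜}
    (hB : Bᴴ * B = diagonal (star d * d)) : ‖B * diagonal d⁻¹‖ ≤ 1 := by
  have hsq : ‖B * diagonal d⁻¹‖ * ‖B * diagonal d⁻¹‖ ≤ 1 := by
    rw [← l2_opNorm_conjTranspose_mul_self, conjTranspose_mul_diagonal_mul_mul_diagonal hB,
      l2_opNorm_diagonal]
    refine pi_norm_le_iff_of_nonneg zero_le_one |>.mpr fun r => ?_
    by_cases h : d r = 0 <;> simp [h]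
  nlinarith [norm_nonneg (B * diagonal d⁻¹)]

theorem exists_contraction_mul_eq (M : Matrix m n 𝕜) :
    ∃ (α : Matrix m n 𝕜) (η : Matrix n n 𝕜), α * η = M ∧ ‖α‖ ≤ 1 ∧ ηᴴ * η = Mᴴ * M := by
  have hP := posSemidef_conjTranspose_mul_self M
  set U : Matrix n n 𝕜 := (hP.1.eigenvectorUnitary : Matrix n n 𝕜)
  have hUU : Uᴴ * U = 1 := Unitary.coe_star_mul_self _
  have hUU' : U * Uᴴ = 1 := Unitary.coe_mul_star_self _
  set s : n → 𝕜 := fun r => (√(hP.1.eigenvalues r) : 𝕜)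
  have hspec : Mᴴ * M = U * diagonal (star s * s) * Uᴴ := by
    have h : star s * s = RCLike.ofReal ∘ hP.1.eigenvalues := by
      ext r
      simp [s, ← RCLike.ofReal_mul, Real.mul_self_sqrt (hP.eigenvalues_nonneg r)]
    rw [h]
    exact hP.1.spectral_theorem
  have hMU : (M * U)ᴴ * (M * U) = diagonal (star s * s) := by
    rw [conjTranspose_mul, Matrix.mul_assoc, ← Matrix.mul_assoc Mᴴ, hspec]
    simp only [← Matrix.mul_assoc, hUU, Matrix.one_mul]
    rw [Matrix.mul_assoc _ Uᴴ U, hUU, Matrix.mul_one]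
  refine ⟨M * U * diagonal s⁻¹, diagonal s * Uᴴ, ?_, l2_opNorm_mul_diagonal_inv_le_one hMU, ?_⟩
  · rw [← Matrix.mul_assoc, Matrix.mul_assoc (M * U), diagonal_mul_diagonal]
    change M * U * diagonal (s⁻¹ * s) * Uᴴ = M
    rw [mul_diagonal_inv_mul_self hMU, Matrix.mul_assoc, hUU', Matrix.mul_one]
  · rw [hspec, conjTranspose_mul, conjTranspose_conjTranspose, diagonal_conjTranspose,
      Matrix.mul_assoc, ← Matrix.mul_assoc (diagonal _), diagonal_mul_diagonal, Matrix.mul_assoc]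
    rfl

end Matrix

section Flatten

open Matrix

variable {k n : ℕ}

lemma flatten_eq_submatrix_comp (A : Matrix (Fin k) (Fin k) (Matrix (Fin n) (Fin n) ℂ)) :
    flatten A =
      (comp _ _ _ _ ℂ A).submatrix finProdFinEquiv.symm finProdFinEquiv.symm :=
  rfl

lemma star_dotProduct_flatten_mulVec (A : Matrix (Fin k) (Fin k) (Matrix (Fin n) (Fin n) ℂ))
    (v : Fin (k * n) → ℂ) :
    star v ⬝ᵥ flatten A *ᵥ v =
      star (v ∘ finProdFinEquiv) ⬝ᵥ comp _ _ _ _ ℂ A *ᵥ (v ∘ finProdFinEquiv) := by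
  rw [flatten_eq_submatrix_comp, submatrix_mulVec_equiv, Equiv.symm_symm,
    dotProduct_comp_equiv_symm]
  rfl

lemma norm_star_dotProduct_comp_mulVec_le (A : Matrix (Fin k) (Fin k) (Matrix (Fin n) (Fin n) ℂ))
    {v : Fin k × Fin n → ℂ} (hv : ‖WithLp.toLp 2 v‖ ≤ 1) :
    ‖star v ⬝ᵥ comp _ _ _ _ ℂ A *ᵥ v‖ ≤ matNumRadius (flatten A) := by
  have h := norm_inner_le_numRadius (toEuclideanLin (flatten A)).toContinuousLinearMap
    (v := WithLp.toLp 2 (v ∘ finProdFinEquiv.symm)) (by rwa [norm_toLp_comp_equiv])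
  rw [LinearMap.coe_toContinuousLinearMap', inner_toEuclideanLin_self,
    star_dotProduct_flatten_mulVec] at h
  rwa [Function.comp_assoc, Equiv.symm_comp_self, Function.comp_id] at h

end Flatten

section Compression

open Matrix
open scoped Kronecker

variable {X : Type*} [AddCommGroup X] [Module ℂ X] {ι : Type*} [Fintype ι] [DecidableEq ι]

lemma comp_map_conjugate (φ : X →ₗ[ℂ] Matrix ι ι ℂ) {k m : ℕ} (α : Matrix (Fin k) (Fin m) ℂ)
    (x : Matrix (Fin k) (Fin k) X) :
    comp _ _ _ _ ℂ ((scalarMulRight (scalarMulLeft αᴴ x) α).map φ) =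
      (α ⊗ₖ (1 : Matrix ι ι ℂ))ᴴ * comp _ _ _ _ ℂ (x.map φ) * (α ⊗ₖ (1 : Matrix ι ι ℂ)) := by
  ext ⟨r, s⟩ ⟨r', t⟩
  simp only [map_apply, scalarMulRight, scalarMulLeft, of_apply, map_sum, map_smul,
    Matrix.sum_apply, Matrix.smul_apply, smul_eq_mul, conjTranspose_apply, mul_apply,
    Fintype.sum_prod_type, kroneckerMap_apply, comp_apply, one_apply, mul_ite, ite_mul, mul_one,
    mul_zero, zero_mul, Finset.sum_ite_eq', Finset.mem_univ, if_true,
    Finset.sum_mul, Finset.mul_sum, apply_ite star, star_zero]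
  exact Finset.sum_congr rfl fun q _ => Finset.sum_congr rfl fun p _ => by ring

end Compression

section Smith

open Matrix
open scoped Matrix.Norms.L2Operator Kronecker

variable {X : Type u} [AddCommGroup X] [Module ℂ X]

lemma matOpNorm_eq_l2_opNorm {m l : ℕ} (α : Matrix (Fin m) (Fin l) ℂ) : matOpNorm α = ‖α‖ :=
  rfl

lemma NRNorm.W_conjugate_le_one (W : NRNorm X) {k m : ℕ} {x : Matrix (Fin k) (Fin k) X}
    (hx : W.W k x ≤ 1) {α : Matrix (Fin k) (Fin m) ℂ} (hα : ‖α‖ ≤ 1) :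
    W.W m (scalarMulRight (scalarMulLeft αᴴ x) α) ≤ 1 := by
  have h := W.cond_WII k m αᴴ x
  rw [conjTranspose_conjTranspose, matOpNorm_eq_l2_opNorm, l2_opNorm_conjTranspose] at h
  exact h.trans (mul_le_one₀ (pow_le_one₀ (norm_nonneg _) hα) (W.nonneg k x) hx)

theorem exists_norm_inner_le_matNumRadius (W : NRNorm X) {n k : ℕ}
    (φ : X →ₗ[ℂ] Matrix (Fin n) (Fin n) ℂ) {x : Matrix (Fin k) (Fin k) X} (hx : W.W k x ≤ 1)
    {ξ : EuclideanSpace ℂ (Fin (k * n))} (hξ : ‖ξ‖ ≤ 1) :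
    ∃ y : Matrix (Fin n) (Fin n) X, W.W n y ≤ 1 ∧
      ‖(inner ℂ ξ ((toEuclideanLin (flatten (x.map φ))).toContinuousLinearMap ξ) : ℂ)‖ ≤
        matNumRadius (flatten (y.map φ)) := by
  -- `vec` stacks columns, so `vec ηᵀ (r, s) = η r s`, matching the indexing of `v`.
  set v := WithLp.ofLp ξ ∘ finProdFinEquiv
  obtain ⟨α, η, hαη, hα, hη⟩ := exists_contraction_mul_eq (of fun p s => v (p, s))
  have hv : v = (α ⊗ₖ 1 : Matrix (Fin k × Fin n) (Fin n × Fin n) ℂ) *ᵥ vec ηᵀ := by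
    rw [kronecker_mulVec_vec, Matrix.one_mul, ← transpose_mul, hαη]
    rfl
  have hnorm : ‖WithLp.toLp 2 (vec ηᵀ)‖ ≤ 1 := by
    rw [norm_toLp_vec_transpose_eq hη]
    exact (norm_toLp_comp_equiv _ _).trans_le hξ
  refine ⟨_, W.W_conjugate_le_one hx hα, ?_⟩
  calc _ = ‖star v ⬝ᵥ comp _ _ _ _ ℂ (x.map φ) *ᵥ v‖ := by
        rw [LinearMap.coe_toContinuousLinearMap', inner_toEuclideanLin_self,
          star_dotProduct_flatten_mulVec]
    _ = ‖star (vec ηᵀ) ⬝ᵥ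
          comp _ _ _ _ ℂ ((scalarMulRight (scalarMulLeft αᴴ x) α).map φ) *ᵥ vec ηᵀ‖ := by
        rw [hv, star_mulVec_dotProduct_mulVec, comp_map_conjugate]
    _ ≤ _ := norm_star_dotProduct_comp_mulVec_le _ hnorm

end Smith

theorem stmt_2_general {X : Type u} [AddCommGroup X] [Module ℂ X] (W : NRNorm X)
    (n : ℕ) (φ : X →ₗ[ℂ] Matrix (Fin n) (Fin n) ℂ) :
    cbNorm W.W (fun k a => matNumRadius (flatten a)) ⇑φ =
      ⨆ (x : Matrix (Fin n) (Fin n) X) (_ : W.W n x ≤ 1),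
        ENNReal.ofReal (matNumRadius (flatten (x.map ⇑φ))) := by
  refine le_antisymm (iSup₂_le fun k x => iSup_le fun hx => ofReal_numRadius_le fun ξ hξ => ?_)
    (le_iSup (fun k => ⨆ (x : Matrix (Fin k) (Fin k) X) (_ : W.W k x ≤ 1),
      ENNReal.ofReal (matNumRadius (flatten (x.map ⇑φ)))) n)
  obtain ⟨y, hy, hle⟩ := exists_norm_inner_le_matNumRadius W φ hx hξ
  exact (ENNReal.ofReal_le_ofReal hle).trans (le_iSup₂_of_le y hy le_rfl)

/-- Smith's lemma for numerical radius operator spaces: for a linear map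
`φ : X → M_n(ℂ)`, the 𝒲-completely bounded norm of `φ` is attained at level `n`. -/
theorem stmt_2 {X : Type u} [AddCommGroup X] [Module ℂ X] (W : NRNorm X)
    (n : ℕ) (hn : 1 ≤ n) (φ : X →ₗ[ℂ] Matrix (Fin n) (Fin n) ℂ) :
    cbNorm W.W (fun k a => matNumRadius (flatten a)) ⇑φ =
      ⨆ (x : Matrix (Fin n) (Fin n) X) (_ : W.W n x ≤ 1),
        ENNReal.ofReal (matNumRadius (flatten (x.map ⇑φ))) :=
  stmt_2_general W n φ
end

section
/- Let (X, 𝒲_n) be a numerical radius operator space and let N be a subspace of X that is closed with respect to 𝒲_1. Identify M_n(X/N) with M_n(X)/M_n(N) and give it the quotient norm 𝒲̃_n([x]) = inf{𝒲_n(x + z) : z ∈ M_n(N)}. Then the norms 𝒲̃_n satisfy conditions (WI) and (WII), so X/N is a numerical radius operator space. -/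
open scoped ComplexOrder Matrix ENNReal TensorProduct

universe u v

/-!
The quotient norm is an infimum over lifts, and the matrix operations in (WI), (WII) and the
norm axioms commute with the quotient map `M_n(X) → M_n(X/N)`, so each upper bound passes from
lifts to the infimum. The lower bound in (WI) is a compression of `x ⊕ y` to a diagonal block,
i.e. (WII) for a selection matrix of norm `≤ 1`. Definiteness uses the closedness of `N`:
polarization against the fourth roots of unity gives `𝒲₁(x_ij) ≤ 4 𝒲_n(x)`, so the entries of
a lift of a matrix of quotient norm zero are `𝒲₁`-limits of elements of `N`.
-/

def selectionMatrix {m n : ℕ} (e : Fin m → Fin n) : Matrix (Fin m) (Fin n) ℂ :=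
  Matrix.of fun i l => if l = e i then 1 else 0

lemma matOpNorm_nonneg {m n : ℕ} (α : Matrix (Fin m) (Fin n) ℂ) : 0 ≤ matOpNorm α :=
  norm_nonneg _

lemma matOpNorm_add_le {m n : ℕ} (α β : Matrix (Fin m) (Fin n) ℂ) :
    matOpNorm (α + β) ≤ matOpNorm α + matOpNorm β := by
  unfold matOpNorm
  rw [map_add, map_add]
  exact norm_add_le _ _

lemma matOpNorm_smul {m n : ℕ} (c : ℂ) (α : Matrix (Fin m) (Fin n) ℂ) :
    matOpNorm (c • α) = ‖c‖ * matOpNorm α := by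
  unfold matOpNorm
  rw [map_smul, map_smul]
  exact norm_smul _ _

lemma matOpNorm_selectionMatrix_le {m n : ℕ} {e : Fin m → Fin n} (he : Function.Injective e) :
    matOpNorm (selectionMatrix e) ≤ 1 := by
  refine ContinuousLinearMap.opNorm_le_bound _ zero_le_one fun v => ?_
  have hv : ∀ i, (Matrix.toEuclideanLin (selectionMatrix e) v) i = v (e i) := by
    intro i
    simp [selectionMatrix, Matrix.mulVec, dotProduct]
  rw [one_mul, LinearMap.coe_toContinuousLinearMap', EuclideanSpace.norm_eq,
    EuclideanSpace.norm_eq]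
  refine Real.sqrt_le_sqrt ?_
  simp only [hv]
  calc ∑ i, ‖v (e i)‖ ^ 2 = ∑ l ∈ Finset.univ.image e, ‖v l‖ ^ 2 :=
        (Finset.sum_image (f := fun l => ‖v l‖ ^ 2) fun _ _ _ _ h => he h).symm
    _ ≤ ∑ l, ‖v l‖ ^ 2 := Finset.sum_le_univ_sum_of_nonneg fun _ => by positivity

lemma matOpNorm_selectionMatrix_add_smul_le {n : ℕ} (i j : Fin n) {v : ℂ} (hv : ‖v‖ = 1) :
    matOpNorm (selectionMatrix (fun _ : Fin 1 => i) + v • selectionMatrix fun _ => j) ≤ 2 := by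
  have hsel : ∀ l : Fin n, matOpNorm (selectionMatrix fun _ : Fin 1 => l) ≤ 1 :=
    fun l => matOpNorm_selectionMatrix_le (Function.injective_of_subsingleton _)
  calc _ ≤ matOpNorm (selectionMatrix fun _ : Fin 1 => i) +
        ‖v‖ * matOpNorm (selectionMatrix fun _ : Fin 1 => j) := by
        rw [← matOpNorm_smul]; exact matOpNorm_add_le _ _
    _ ≤ 1 + 1 * 1 := by rw [hv]; gcongr <;> exact hsel _
    _ = 2 := by norm_num

lemma blockDiag_submatrix_castAdd {X : Type*} [Zero X] {m n : ℕ} (x : Matrix (Fin m) (Fin m) X)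
    (y : Matrix (Fin n) (Fin n) X) :
    (blockDiag x y).submatrix (Fin.castAdd n) (Fin.castAdd n) = x := by
  ext i j
  simp [blockDiag]

lemma blockDiag_submatrix_natAdd {X : Type*} [Zero X] {m n : ℕ} (x : Matrix (Fin m) (Fin m) X)
    (y : Matrix (Fin n) (Fin n) X) :
    (blockDiag x y).submatrix (Fin.natAdd m) (Fin.natAdd m) = y := by
  ext i j
  simp [blockDiag]

section MatrixAlgebra

variable {X Y : Type*} [AddCommGroup X] [Module ℂ X] [AddCommGroup Y] [Module ℂ Y]

lemma scalarMulRight_scalarMulLeft_selectionMatrix {m n : ℕ} (e : Fin m → Fin n)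
    (z : Matrix (Fin n) (Fin n) X) :
    scalarMulRight (scalarMulLeft (selectionMatrix e) z) (selectionMatrix e)ᴴ =
      z.submatrix e e := by
  ext i i'
  simp [scalarMulRight, scalarMulLeft, selectionMatrix, Matrix.conjTranspose_apply,
    apply_ite (starRingEnd ℂ), ite_smul, Finset.sum_ite_eq']

lemma scalarMulRight_scalarMulLeft_polarization {n : ℕ} (i j : Fin n) (v : ℂ)
    (x : Matrix (Fin n) (Fin n) X) :
    scalarMulRight
        (scalarMulLeft (selectionMatrix (fun _ : Fin 1 => i) + v • selectionMatrix fun _ => j) x)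
        (selectionMatrix (fun _ : Fin 1 => i) + v • selectionMatrix fun _ => j)ᴴ =
      Matrix.of fun _ _ => x i i + star v • x i j + v • x j i + (v * star v) • x j j := by
  ext a b
  simp [scalarMulRight, scalarMulLeft, selectionMatrix, Matrix.conjTranspose_apply, add_smul,
    smul_add, Finset.sum_add_distrib, ite_smul, Finset.sum_ite_eq', smul_smul, mul_comm,
    apply_ite (starRingEnd ℂ), mul_add, mul_ite]
  abel

lemma map_scalarMulRight_scalarMulLeft (f : X →ₗ[ℂ] Y) {m n : ℕ}
    (α : Matrix (Fin n) (Fin m) ℂ) (x : Matrix (Fin m) (Fin m) X)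
    (β : Matrix (Fin m) (Fin n) ℂ) :
    (scalarMulRight (scalarMulLeft α x) β).map f =
      scalarMulRight (scalarMulLeft α (x.map f)) β := by
  ext i j
  simp [scalarMulRight, scalarMulLeft]

lemma map_blockDiag (f : X →ₗ[ℂ] Y) {m n : ℕ} (x : Matrix (Fin m) (Fin m) X)
    (y : Matrix (Fin n) (Fin n) X) :
    (blockDiag x y).map f = blockDiag (x.map f) (y.map f) := by
  ext i j
  simp only [blockDiag, Matrix.map_apply, Matrix.submatrix_apply]
  rcases finSumFinEquiv.symm i with a | a <;> rcases finSumFinEquiv.symm j with b | b <;>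
    simp

end MatrixAlgebra

namespace NRNorm

variable {X : Type u} [AddCommGroup X] [Module ℂ X] (W : NRNorm X)

lemma W_zero (n : ℕ) : W.W n 0 = 0 :=
  (W.eq_zero_iff n 0).mpr rfl

lemma W_sum_le {n : ℕ} {ι : Type*} (s : Finset ι) (x : ι → Matrix (Fin n) (Fin n) X) :
    W.W n (∑ k ∈ s, x k) ≤ ∑ k ∈ s, W.W n (x k) :=
  Finset.le_sum_of_subadditive (W.W n) (W.W_zero n).le (W.add_le n) s x

lemma W_submatrix_le {k n : ℕ} {e : Fin k → Fin n} (he : Function.Injective e)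
    (z : Matrix (Fin n) (Fin n) X) : W.W k (z.submatrix e e) ≤ W.W n z := by
  rw [← scalarMulRight_scalarMulLeft_selectionMatrix]
  calc _ ≤ matOpNorm (selectionMatrix e) ^ 2 * W.W n z := W.cond_WII _ _ _ _
    _ ≤ 1 * W.W n z := by
        gcongr
        · exact W.nonneg n z
        · exact pow_le_one₀ (matOpNorm_nonneg _) (matOpNorm_selectionMatrix_le he)
    _ = W.W n z := one_mul _

lemma W_entry_le {n : ℕ} (x : Matrix (Fin n) (Fin n) X) (i j : Fin n) :
    W.W 1 (Matrix.of fun _ _ => x i j) ≤ 4 * W.W n x := by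
  set α : ℂ → Matrix (Fin 1) (Fin n) ℂ :=
    fun v => selectionMatrix (fun _ => i) + v • selectionMatrix fun _ => j
  set compress := fun v => scalarMulRight (scalarMulLeft (α v) x) (α v)ᴴ
  have hcompress : ∀ v : ℂ, ‖v‖ = 1 → W.W 1 (v • compress v) ≤ 4 * W.W n x := by
    intro v hv
    rw [W.smul_eq, hv, one_mul]
    calc W.W 1 (compress v) ≤ matOpNorm (α v) ^ 2 * W.W n x := W.cond_WII _ _ _ _
      _ ≤ 2 ^ 2 * W.W n x := by
          gcongr
          exacts [W.nonneg n x, matOpNorm_nonneg _, matOpNorm_selectionMatrix_add_smul_le i j hv]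
      _ = 4 * W.W n x := by norm_num
  -- polarization: averaged against the fourth roots of unity, only the `x i j` term survives
  have hpol : ∑ k : Fin 4, Complex.I ^ (k : ℕ) • compress (Complex.I ^ (k : ℕ)) =
      (4 : ℂ) • Matrix.of fun _ _ => x i j := by
    simp only [compress, α, scalarMulRight_scalarMulLeft_polarization]
    ext a b
    simp only [Fin.sum_univ_four, Matrix.add_apply, Matrix.smul_apply, Matrix.of_apply]
    match_scalars <;> norm_num [pow_succ]
  have hscaled : 4 * W.W 1 (Matrix.of fun _ _ => x i j) ≤ 4 * (4 * W.W n x) :=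
    calc 4 * W.W 1 (Matrix.of fun _ _ => x i j)
        = W.W 1 ((4 : ℂ) • Matrix.of fun _ _ => x i j) := by rw [W.smul_eq]; norm_num
      _ ≤ ∑ k : Fin 4, W.W 1 (Complex.I ^ (k : ℕ) • compress (Complex.I ^ (k : ℕ))) := by
          rw [← hpol]; exact W.W_sum_le _ _
      _ ≤ ∑ _k : Fin 4, 4 * W.W n x :=
          Finset.sum_le_sum fun k _ => hcompress _ (by simp)
      _ = 4 * (4 * W.W n x) := by simp
  linarith

variable (N : Submodule ℂ X)

noncomputable def quotientW (n : ℕ) (q : Matrix (Fin n) (Fin n) (X ⧸ N)) : ℝ :=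
  sInf {t | ∃ x : Matrix (Fin n) (Fin n) X, x.map ⇑(Submodule.mkQ N) = q ∧ t = W.W n x}

lemma exists_map_mkQ_eq {n : ℕ} (q : Matrix (Fin n) (Fin n) (X ⧸ N)) :
    ∃ x : Matrix (Fin n) (Fin n) X, x.map ⇑(Submodule.mkQ N) = q := by
  choose x hx using fun i j => Submodule.Quotient.mk_surjective N (q i j)
  exact ⟨Matrix.of x, by ext i j; exact hx i j⟩

lemma quotientW_le {n : ℕ} {q : Matrix (Fin n) (Fin n) (X ⧸ N)}
    {x : Matrix (Fin n) (Fin n) X} (hx : x.map ⇑(Submodule.mkQ N) = q) :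
    W.quotientW N n q ≤ W.W n x :=
  csInf_le ⟨0, by rintro _ ⟨y, -, rfl⟩; exact W.nonneg n y⟩ ⟨x, hx, rfl⟩

lemma quotientW_nonneg {n : ℕ} (q : Matrix (Fin n) (Fin n) (X ⧸ N)) :
    0 ≤ W.quotientW N n q :=
  Real.sInf_nonneg fun _ ⟨x, _, ht⟩ => ht ▸ W.nonneg n x

lemma exists_map_mkQ_eq_W_lt {n : ℕ} {q : Matrix (Fin n) (Fin n) (X ⧸ N)} {t : ℝ}
    (h : W.quotientW N n q < t) :
    ∃ x : Matrix (Fin n) (Fin n) X, x.map ⇑(Submodule.mkQ N) = q ∧ W.W n x < t := by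
  obtain ⟨x₀, hx₀⟩ := exists_map_mkQ_eq N q
  obtain ⟨_, ⟨x, hx, rfl⟩, hxt⟩ :=
    exists_lt_of_csInf_lt (s := {t | ∃ x : Matrix (Fin n) (Fin n) X,
      x.map ⇑(Submodule.mkQ N) = q ∧ t = W.W n x}) ⟨_, x₀, hx₀, rfl⟩ h
  exact ⟨x, hx, hxt⟩

lemma quotientW_le_mul_of_forall {m n : ℕ} {p : Matrix (Fin m) (Fin m) (X ⧸ N)}
    {q : Matrix (Fin n) (Fin n) (X ⧸ N)} {C : ℝ} (hC : 0 ≤ C)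
    (h : ∀ x : Matrix (Fin n) (Fin n) X, x.map ⇑(Submodule.mkQ N) = q →
      W.quotientW N m p ≤ C * W.W n x) :
    W.quotientW N m p ≤ C * W.quotientW N n q := by
  obtain ⟨x₀, hx₀⟩ := exists_map_mkQ_eq N q
  rw [← smul_eq_mul, quotientW, quotientW, ← Real.sInf_smul_of_nonneg hC]
  refine le_csInf (Set.Nonempty.smul_set ⟨_, x₀, hx₀, rfl⟩) ?_
  rintro _ ⟨_, ⟨x, hx, rfl⟩, rfl⟩
  exact h x hx

lemma quotientW_eq_zero_iff
    (hclosed : ∀ v : X, (∀ ε : ℝ, 0 < ε → ∃ u ∈ N,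
        W.W 1 (Matrix.of fun _ _ => v - u) < ε) → v ∈ N)
    {n : ℕ} (q : Matrix (Fin n) (Fin n) (X ⧸ N)) :
    W.quotientW N n q = 0 ↔ q = 0 := by
  refine ⟨fun h => ?_, ?_⟩
  · obtain ⟨x₀, rfl⟩ := exists_map_mkQ_eq N q
    ext i j
    refine (Submodule.Quotient.mk_eq_zero N).mpr (hclosed _ fun ε hε => ?_)
    obtain ⟨x, hx, hxε⟩ := W.exists_map_mkQ_eq_W_lt N (t := ε / 4) (by rw [h]; positivity)
    refine ⟨x₀ i j - x i j, ?_, ?_⟩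
    · rw [← Submodule.Quotient.mk_eq_zero, Submodule.Quotient.mk_sub, sub_eq_zero]
      exact (congrFun (congrFun hx i) j).symm
    · rw [sub_sub_cancel]
      linarith [W.W_entry_le x i j]
  · rintro rfl
    refine le_antisymm ?_ (W.quotientW_nonneg N 0)
    calc W.quotientW N n 0 ≤ W.W n 0 := W.quotientW_le N (Matrix.map_zero _ (map_zero _))
      _ = 0 := W.W_zero n

lemma quotientW_add_le {n : ℕ} (p q : Matrix (Fin n) (Fin n) (X ⧸ N)) :
    W.quotientW N n (p + q) ≤ W.quotientW N n p + W.quotientW N n q := by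
  refine le_of_forall_pos_le_add fun ε hε => ?_
  obtain ⟨x, rfl, hx⟩ := W.exists_map_mkQ_eq_W_lt N
    (show W.quotientW N n p < W.quotientW N n p + ε / 2 by linarith)
  obtain ⟨y, rfl, hy⟩ := W.exists_map_mkQ_eq_W_lt N
    (show W.quotientW N n q < W.quotientW N n q + ε / 2 by linarith)
  calc W.quotientW N n (x.map _ + y.map _) ≤ W.W n (x + y) :=
        W.quotientW_le N (Matrix.map_add _ (map_add _) x y)
    _ ≤ W.W n x + W.W n y := W.add_le n x y
    _ ≤ _ := by linarith

lemma quotientW_smul_le {n : ℕ} (c : ℂ) (q : Matrix (Fin n) (Fin n) (X ⧸ N)) :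
    W.quotientW N n (c • q) ≤ ‖c‖ * W.quotientW N n q :=
  W.quotientW_le_mul_of_forall N (norm_nonneg c) fun x hx =>
    (W.quotientW_le N (by rw [Matrix.map_smul _ c (map_smul _ c), hx])).trans_eq (W.smul_eq n c x)

lemma quotientW_smul {n : ℕ} (c : ℂ) (q : Matrix (Fin n) (Fin n) (X ⧸ N)) :
    W.quotientW N n (c • q) = ‖c‖ * W.quotientW N n q := by
  refine le_antisymm (W.quotientW_smul_le N c q) ?_
  rcases eq_or_ne c 0 with rfl | hc
  · simpa using W.quotientW_nonneg N _
  · calc ‖c‖ * W.quotientW N n q = ‖c‖ * W.quotientW N n (c⁻¹ • c • q) := by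
          rw [inv_smul_smul₀ hc]
      _ ≤ ‖c‖ * (‖c⁻¹‖ * W.quotientW N n (c • q)) := by
          gcongr; exact W.quotientW_smul_le N _ _
      _ = W.quotientW N n (c • q) := by
          rw [← mul_assoc, ← norm_mul, mul_inv_cancel₀ hc, norm_one, one_mul]

lemma quotientW_submatrix_le {k n : ℕ} {e : Fin k → Fin n} (he : Function.Injective e)
    (q : Matrix (Fin n) (Fin n) (X ⧸ N)) :
    W.quotientW N k (q.submatrix e e) ≤ W.quotientW N n q := by
  simpa using W.quotientW_le_mul_of_forall N zero_le_one fun x hx =>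
    (W.quotientW_le N (by rw [← hx]; rfl)).trans
      ((W.W_submatrix_le he x).trans_eq (one_mul _).symm)

lemma quotientW_blockDiag {m n : ℕ} (p : Matrix (Fin m) (Fin m) (X ⧸ N))
    (q : Matrix (Fin n) (Fin n) (X ⧸ N)) :
    W.quotientW N (m + n) (blockDiag p q) = max (W.quotientW N m p) (W.quotientW N n q) := by
  refine le_antisymm (le_of_forall_pos_le_add fun ε hε => ?_) (max_le ?_ ?_)
  · obtain ⟨x, rfl, hx⟩ :=
      W.exists_map_mkQ_eq_W_lt N (lt_add_of_pos_right (W.quotientW N m p) hε)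
    obtain ⟨y, rfl, hy⟩ :=
      W.exists_map_mkQ_eq_W_lt N (lt_add_of_pos_right (W.quotientW N n q) hε)
    calc W.quotientW N (m + n) (blockDiag (x.map _) (y.map _)) ≤ W.W (m + n) (blockDiag x y) :=
          W.quotientW_le N (map_blockDiag N.mkQ x y)
      _ = max (W.W m x) (W.W n y) := W.cond_WI m n x y
      _ ≤ max (W.quotientW N m (x.map _) + ε) (W.quotientW N n (y.map _) + ε) :=
          max_le_max hx.le hy.le
      _ = _ := max_add_add_right _ _ _
  · simpa only [blockDiag_submatrix_castAdd] using
      W.quotientW_submatrix_le N (Fin.castAdd_injective _ _) (blockDiag p q)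
  · simpa only [blockDiag_submatrix_natAdd] using
      W.quotientW_submatrix_le N (Fin.natAdd_injective _ _) (blockDiag p q)

lemma quotientW_cond_WII {m n : ℕ} (α : Matrix (Fin n) (Fin m) ℂ)
    (q : Matrix (Fin m) (Fin m) (X ⧸ N)) :
    W.quotientW N n (scalarMulRight (scalarMulLeft α q) αᴴ) ≤
      matOpNorm α ^ 2 * W.quotientW N m q :=
  W.quotientW_le_mul_of_forall N (sq_nonneg _) fun x hx =>
    (W.quotientW_le N (by rw [map_scalarMulRight_scalarMulLeft, hx])).trans (W.cond_WII m n α x)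

noncomputable def quotient
    (hclosed : ∀ v : X, (∀ ε : ℝ, 0 < ε → ∃ u ∈ N,
        W.W 1 (Matrix.of fun _ _ => v - u) < ε) → v ∈ N) :
    NRNorm (X ⧸ N) where
  W := W.quotientW N
  nonneg _ := W.quotientW_nonneg N
  eq_zero_iff _ := W.quotientW_eq_zero_iff N hclosed
  add_le _ := W.quotientW_add_le N
  smul_eq _ := W.quotientW_smul N
  cond_WI _ _ := W.quotientW_blockDiag N
  cond_WII _ _ := W.quotientW_cond_WII N

end NRNorm

/-- if `N` is a 𝒲₁-closed subspace of a numerical radius operator space `X`, then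
the quotient norms on `M_n(X/N) = M_n(X)/M_n(N)` satisfy (WI) and (WII), so `X/N` is a
numerical radius operator space. -/
theorem stmt_7 {X : Type u} [AddCommGroup X] [Module ℂ X] (W : NRNorm X)
    (N : Submodule ℂ X)
    (hclosed : ∀ v : X, (∀ ε : ℝ, 0 < ε → ∃ u ∈ N,
        W.W 1 (Matrix.of fun _ _ => v - u) < ε) → v ∈ N) :
    ∃ WQ : NRNorm (X ⧸ N),
      ∀ (n : ℕ) (q : Matrix (Fin n) (Fin n) (X ⧸ N)),
        WQ.W n q = sInf {t | ∃ x : Matrix (Fin n) (Fin n) X,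
          x.map ⇑(Submodule.mkQ N) = q ∧ t = W.W n x} :=
  ⟨W.quotient N hclosed, fun _ _ => rfl⟩
end

section
/- Let (X, 𝒪_n) be an operator space. Then for each n the function 𝒲_max is a norm on M_n(X), and the sequence of norms 𝒲_max satisfies conditions (WI) and (WII): 𝒲_max(x ⊕ y) = max(𝒲_max(x), 𝒲_max(y)) for block-diagonal matrices, and 𝒲_max(α x α*) ≤ ‖α‖² 𝒲_max(x) for all x ∈ M_m(X) and complex n×m matrices α. -/
open scoped ComplexOrder Matrix ENNReal TensorProduct

universe u v

/-! Every decomposition `x = a y b` with `𝒪_r(y) = 1` costs `½‖aa* + b*b‖ ≥ ½‖a‖‖b‖ ≥ ½𝒪_n(x)`,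
so `𝒲_max ≥ 𝒪_n / 2` is definite. Decompositions combine: `[a a'] (y ⊕ y') [b; b']` decomposes
`x + x'`, `(a ⊕ a') (y ⊕ y') (b ⊕ b')` decomposes `x ⊕ x'`, `(αa) y (bα*)` decomposes `αxα*`, and
`(da) y (db)` with `d² = c` decomposes `cx`; by (OI) the middle factors stay normalised, and the
new cost is at most the sum, the maximum, `‖α‖²` times, resp. `|c|` times the old costs. The
reverse inequality in (WI) is (WII) for the coisometries `[1 0]` and `[0 1]`. -/
open scoped Matrix.Norms.L2Operator
open Matrix

section L2OpNorm

variable {m n : Type*} [Fintype m] [Fintype n] [DecidableEq m] [DecidableEq n]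

lemma Matrix.l2_opNorm_one_le {𝕜 : Type*} [RCLike 𝕜] : ‖(1 : Matrix n n 𝕜)‖ ≤ 1 := by
  rw [← diagonal_one, l2_opNorm_diagonal]
  exact (pi_norm_le_iff_of_nonneg zero_le_one).2 fun _ => by simp

lemma Matrix.l2_opNorm_le_one_of_mul_conjTranspose_eq_one {𝕜 : Type*} [RCLike 𝕜]
    {P : Matrix m n 𝕜} (hP : P * Pᴴ = 1) : ‖P‖ ≤ 1 := by
  have h := l2_opNorm_conjTranspose_mul_self Pᴴ
  rw [conjTranspose_conjTranspose, hP, l2_opNorm_conjTranspose] at h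
  nlinarith [l2_opNorm_one_le (𝕜 := 𝕜) (n := m), norm_nonneg P]

open scoped MatrixOrder in
lemma Matrix.l2_opNorm_mul_l2_opNorm_le (a : Matrix m n ℂ) (b : Matrix n m ℂ) :
    ‖a‖ * ‖b‖ ≤ ‖a * aᴴ + bᴴ * b‖ := by
  have ha : ‖a‖ * ‖a‖ ≤ ‖a * aᴴ + bᴴ * b‖ := by
    rw [← l2_opNorm_conjTranspose a, ← l2_opNorm_conjTranspose_mul_self,
      conjTranspose_conjTranspose]
    exact CStarAlgebra.norm_le_norm_of_nonneg_of_le (posSemidef_self_mul_conjTranspose a).nonneg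
      (le_add_of_nonneg_right (posSemidef_conjTranspose_mul_self b).nonneg)
  have hb : ‖b‖ * ‖b‖ ≤ ‖a * aᴴ + bᴴ * b‖ := by
    rw [← l2_opNorm_conjTranspose_mul_self]
    exact CStarAlgebra.norm_le_norm_of_nonneg_of_le (posSemidef_conjTranspose_mul_self b).nonneg
      (le_add_of_nonneg_left (posSemidef_self_mul_conjTranspose a).nonneg)
  nlinarith [sq_nonneg (‖a‖ - ‖b‖)]

end L2OpNorm

section FinBlocks

variable {R : Type*} {m n r s k l : ℕ}

def blockDiagRect [Zero R] (a : Matrix (Fin m) (Fin r) R) (b : Matrix (Fin n) (Fin s) R) :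
    Matrix (Fin (m + n)) (Fin (r + s)) R :=
  (fromBlocks a 0 0 b).submatrix finSumFinEquiv.symm finSumFinEquiv.symm

def appendCols (a : Matrix (Fin n) (Fin r) R) (b : Matrix (Fin n) (Fin s) R) :
    Matrix (Fin n) (Fin (r + s)) R :=
  (fromCols a b).submatrix id finSumFinEquiv.symm

def appendRows (a : Matrix (Fin r) (Fin n) R) (b : Matrix (Fin s) (Fin n) R) :
    Matrix (Fin (r + s)) (Fin n) R :=
  (fromRows a b).submatrix finSumFinEquiv.symm id

lemma blockDiag_eq_blockDiagRect [Zero R] (x : Matrix (Fin m) (Fin m) R)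
    (y : Matrix (Fin n) (Fin n) R) : blockDiag x y = blockDiagRect x y := rfl

lemma blockDiagRect_mul [Semiring R] (a : Matrix (Fin m) (Fin r) R)
    (a' : Matrix (Fin n) (Fin s) R) (b : Matrix (Fin r) (Fin k) R)
    (b' : Matrix (Fin s) (Fin l) R) :
    blockDiagRect a a' * blockDiagRect b b' = blockDiagRect (a * b) (a' * b') := by
  simp [blockDiagRect, submatrix_mul_equiv, fromBlocks_multiply]

lemma blockDiagRect_add [AddZeroClass R] (a b : Matrix (Fin m) (Fin r) R)
    (a' b' : Matrix (Fin n) (Fin s) R) :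
    blockDiagRect a a' + blockDiagRect b b' = blockDiagRect (a + b) (a' + b') := by
  ext i j
  induction i using Fin.addCases <;> induction j using Fin.addCases <;> simp [blockDiagRect]

lemma blockDiagRect_conjTranspose [AddMonoid R] [StarAddMonoid R] (a : Matrix (Fin m) (Fin r) R)
    (b : Matrix (Fin n) (Fin s) R) : (blockDiagRect a b)ᴴ = blockDiagRect aᴴ bᴴ := by
  simp [blockDiagRect, conjTranspose_submatrix, fromBlocks_conjTranspose]

lemma appendCols_conjTranspose [Star R] (a : Matrix (Fin n) (Fin r) R)
    (b : Matrix (Fin n) (Fin s) R) : (appendCols a b)ᴴ = appendRows aᴴ bᴴ := by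
  rw [appendCols, appendRows, conjTranspose_submatrix,
    conjTranspose_fromCols_eq_fromRows_conjTranspose]

lemma appendRows_conjTranspose [Star R] (a : Matrix (Fin r) (Fin n) R)
    (b : Matrix (Fin s) (Fin n) R) : (appendRows a b)ᴴ = appendCols aᴴ bᴴ := by
  rw [appendCols, appendRows, conjTranspose_submatrix,
    conjTranspose_fromRows_eq_fromCols_conjTranspose]

lemma appendCols_mul_appendRows [Semiring R] (a : Matrix (Fin n) (Fin r) R)
    (a' : Matrix (Fin n) (Fin s) R) (b : Matrix (Fin r) (Fin k) R)
    (b' : Matrix (Fin s) (Fin k) R) :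
    appendCols a a' * appendRows b b' = a * b + a' * b' := by
  rw [appendCols, appendRows, submatrix_mul_equiv, fromCols_mul_fromRows]
  rfl

lemma l2_opNorm_blockDiagRect_le (a : Matrix (Fin m) (Fin r) ℂ) (b : Matrix (Fin n) (Fin s) ℂ) :
    ‖blockDiagRect a b‖ ≤ max ‖a‖ ‖b‖ := by
  refine ContinuousLinearMap.opNorm_le_bound _ (by positivity) fun v => ?_
  set v₁ : EuclideanSpace ℂ (Fin r) := WithLp.toLp 2 fun i => v (Fin.castAdd s i)
  set v₂ : EuclideanSpace ℂ (Fin s) := WithLp.toLp 2 fun i => v (Fin.natAdd r i)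
  have hv : ‖v‖ ^ 2 = ‖v₁‖ ^ 2 + ‖v₂‖ ^ 2 := by
    simp [v₁, v₂, EuclideanSpace.norm_sq_eq, Fin.sum_univ_add]
  change ‖(EuclideanSpace.equiv _ ℂ).symm (blockDiagRect a b *ᵥ v)‖ ≤ _
  have hbv : ‖(EuclideanSpace.equiv _ ℂ).symm (blockDiagRect a b *ᵥ v)‖ ^ 2 =
      ‖(EuclideanSpace.equiv _ ℂ).symm (a *ᵥ v₁)‖ ^ 2 +
        ‖(EuclideanSpace.equiv _ ℂ).symm (b *ᵥ v₂)‖ ^ 2 := by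
    simp [v₁, v₂, EuclideanSpace.norm_sq_eq, Fin.sum_univ_add, blockDiagRect, mulVec, dotProduct]
  have ha := (l2_opNorm_mulVec a v₁).trans <|
    mul_le_mul_of_nonneg_right (le_max_left ‖a‖ ‖b‖) (norm_nonneg _)
  have hb := (l2_opNorm_mulVec b v₂).trans <|
    mul_le_mul_of_nonneg_right (le_max_right ‖a‖ ‖b‖) (norm_nonneg _)
  rw [← pow_le_pow_iff_left₀ (norm_nonneg _) (by positivity) two_ne_zero, hbv, mul_pow, hv]
  nlinarith [norm_nonneg ((EuclideanSpace.equiv _ ℂ).symm (a *ᵥ v₁)),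
    norm_nonneg ((EuclideanSpace.equiv _ ℂ).symm (b *ᵥ v₂))]

end FinBlocks

section ScalarMul

variable {X : Type*} [AddCommGroup X] [Module ℂ X] {m n k p : ℕ}

lemma scalarMulLeft_mul (α : Matrix (Fin m) (Fin n) ℂ) (β : Matrix (Fin n) (Fin k) ℂ)
    (x : Matrix (Fin k) (Fin p) X) :
    scalarMulLeft (α * β) x = scalarMulLeft α (scalarMulLeft β x) := by
  ext i j
  simp only [scalarMulLeft, mul_apply, of_apply, Finset.smul_sum, Finset.sum_smul, smul_smul]
  exact Finset.sum_comm

lemma scalarMulRight_mul (x : Matrix (Fin m) (Fin n) X) (β : Matrix (Fin n) (Fin k) ℂ)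
    (γ : Matrix (Fin k) (Fin p) ℂ) :
    scalarMulRight x (β * γ) = scalarMulRight (scalarMulRight x β) γ := by
  ext i j
  simp only [scalarMulRight, mul_apply, of_apply, Finset.smul_sum, Finset.sum_smul, smul_smul]
  rw [Finset.sum_comm]
  simp only [mul_comm]

lemma scalarMulLeft_scalarMulRight (α : Matrix (Fin m) (Fin n) ℂ)
    (x : Matrix (Fin n) (Fin k) X) (β : Matrix (Fin k) (Fin p) ℂ) :
    scalarMulLeft α (scalarMulRight x β) = scalarMulRight (scalarMulLeft α x) β := by
  ext i j
  simp only [scalarMulLeft, scalarMulRight, of_apply, Finset.smul_sum, smul_smul]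
  rw [Finset.sum_comm]
  simp only [mul_comm]

lemma scalarMul_sandwich {r s : ℕ} (α : Matrix (Fin m) (Fin n) ℂ)
    (a : Matrix (Fin n) (Fin r) ℂ) (y : Matrix (Fin r) (Fin s) X) (b : Matrix (Fin s) (Fin k) ℂ)
    (β : Matrix (Fin k) (Fin p) ℂ) :
    scalarMulRight (scalarMulLeft α (scalarMulRight (scalarMulLeft a y) b)) β =
      scalarMulRight (scalarMulLeft (α * a) y) (b * β) := by
  rw [scalarMulLeft_mul, scalarMulRight_mul, scalarMulLeft_scalarMulRight]

lemma scalarMulLeft_smul_one (c : ℂ) (x : Matrix (Fin n) (Fin k) X) :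
    scalarMulLeft (c • (1 : Matrix (Fin n) (Fin n) ℂ)) x = c • x := by
  ext i j
  simp [scalarMulLeft, one_apply, ite_smul]

lemma scalarMulRight_smul_one (c : ℂ) (x : Matrix (Fin k) (Fin n) X) :
    scalarMulRight x (c • (1 : Matrix (Fin n) (Fin n) ℂ)) = c • x := by
  ext i j
  simp [scalarMulRight, one_apply, ite_smul]

lemma scalarMul_one_one (x : Matrix (Fin n) (Fin n) X) :
    scalarMulRight (scalarMulLeft 1 x) 1 = x := by
  ext i j
  simp [scalarMulLeft, scalarMulRight, one_apply, ite_smul]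

@[simp] lemma scalarMulLeft_zero (x : Matrix (Fin n) (Fin k) X) :
    scalarMulLeft (0 : Matrix (Fin m) (Fin n) ℂ) x = 0 := by
  ext i j
  simp [scalarMulLeft]

@[simp] lemma zero_scalarMulRight (β : Matrix (Fin n) (Fin k) ℂ) :
    scalarMulRight (0 : Matrix (Fin m) (Fin n) X) β = 0 := by
  ext i j
  simp [scalarMulRight]

lemma scalarMul_appendCols_blockDiag_appendRows {r s : ℕ} (a : Matrix (Fin n) (Fin r) ℂ)
    (a' : Matrix (Fin n) (Fin s) ℂ) (y : Matrix (Fin r) (Fin r) X) (y' : Matrix (Fin s) (Fin s) X)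
    (b : Matrix (Fin r) (Fin k) ℂ) (b' : Matrix (Fin s) (Fin k) ℂ) :
    scalarMulRight (scalarMulLeft (appendCols a a') (blockDiag y y')) (appendRows b b') =
      scalarMulRight (scalarMulLeft a y) b + scalarMulRight (scalarMulLeft a' y') b' := by
  ext i j
  simp [blockDiag_eq_blockDiagRect, blockDiagRect, appendCols, appendRows, scalarMulLeft,
    scalarMulRight, Fin.sum_univ_add]

lemma scalarMul_blockDiag {r s : ℕ} (a : Matrix (Fin m) (Fin r) ℂ)
    (a' : Matrix (Fin n) (Fin s) ℂ) (y : Matrix (Fin r) (Fin r) X) (y' : Matrix (Fin s) (Fin s) X)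
    (b : Matrix (Fin r) (Fin m) ℂ) (b' : Matrix (Fin s) (Fin n) ℂ) :
    scalarMulRight (scalarMulLeft (blockDiagRect a a') (blockDiag y y')) (blockDiagRect b b') =
      blockDiag (scalarMulRight (scalarMulLeft a y) b)
        (scalarMulRight (scalarMulLeft a' y') b') := by
  ext i j
  induction i using Fin.addCases <;> induction j using Fin.addCases <;>
    simp [blockDiag_eq_blockDiagRect, blockDiagRect, scalarMulLeft, scalarMulRight,
      Fin.sum_univ_add]

end ScalarMul

lemma OSNorm.O_inv_smul_self {X : Type u} [AddCommGroup X] [Module ℂ X] (OS : OSNorm X)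
    {r : ℕ} {y : Matrix (Fin r) (Fin r) X} (hy : y ≠ 0) :
    OS.O r ((((OS.O r y)⁻¹ : ℝ) : ℂ) • y) = 1 := by
  rw [OS.smul_eq, Complex.norm_real, norm_inv, Real.norm_of_nonneg (OS.nonneg r y),
    inv_mul_cancel₀ (mt (OS.eq_zero_iff r y).1 hy)]

section Wmax

variable {X : Type u} [AddCommGroup X] [Module ℂ X] (OS : OSNorm X) {n : ℕ}

lemma wmax_nonneg (x : Matrix (Fin n) (Fin n) X) : 0 ≤ Wmax OS n x :=
  Real.sInf_nonneg <| by
    rintro _ ⟨_, _, _, _, -, -, rfl⟩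
    exact mul_nonneg one_half_pos.le (norm_nonneg _)

lemma wmax_le_of_decomposition {x : Matrix (Fin n) (Fin n) X} {r : ℕ}
    {a : Matrix (Fin n) (Fin r) ℂ} {y : Matrix (Fin r) (Fin r) X} {b : Matrix (Fin r) (Fin n) ℂ}
    (hx : x = scalarMulRight (scalarMulLeft a y) b) (hy : OS.O r y = 1) :
    Wmax OS n x ≤ 1 / 2 * ‖a * aᴴ + bᴴ * b‖ := by
  refine csInf_le ⟨0, ?_⟩ ⟨r, a, y, b, hx, hy, rfl⟩
  rintro _ ⟨_, _, _, _, -, -, rfl⟩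
  exact mul_nonneg one_half_pos.le (norm_nonneg _)

lemma wmax_eq_zero_of_subsingleton [Subsingleton X] (x : Matrix (Fin n) (Fin n) X) :
    Wmax OS n x = 0 := by
  rw [Wmax]
  convert Real.sInf_empty using 2
  refine Set.eq_empty_of_forall_notMem ?_
  rintro _ ⟨r, _, y, _, -, hy, -⟩
  rw [Subsingleton.elim y 0, (OS.eq_zero_iff r 0).2 rfl] at hy
  exact zero_ne_one hy

variable [Nontrivial X]

lemma exists_decomposition (x : Matrix (Fin n) (Fin n) X) :
    ∃ (r : ℕ) (a : Matrix (Fin n) (Fin r) ℂ) (y : Matrix (Fin r) (Fin r) X)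
      (b : Matrix (Fin r) (Fin n) ℂ), x = scalarMulRight (scalarMulLeft a y) b ∧ OS.O r y = 1 := by
  by_cases hx : x = 0
  · obtain ⟨x₀, hx₀⟩ := exists_ne (0 : X)
    set y : Matrix (Fin 1) (Fin 1) X := of fun _ _ => x₀
    have hy : y ≠ 0 := fun h => hx₀ (congr_fun₂ h 0 0)
    exact ⟨1, 0, _, 0, by simp [hx], OS.O_inv_smul_self hy⟩
  · have hc : 0 < OS.O n x := (OS.nonneg n x).lt_of_ne' (mt (OS.eq_zero_iff n x).1 hx)
    refine ⟨n, (√(OS.O n x) : ℂ) • 1, _, (√(OS.O n x) : ℂ) • 1, ?_, OS.O_inv_smul_self hx⟩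
    rw [scalarMulLeft_smul_one, scalarMulRight_smul_one, smul_smul, smul_smul,
      ← Complex.ofReal_mul, Real.mul_self_sqrt hc.le, ← Complex.ofReal_mul,
      mul_inv_cancel₀ hc.ne', Complex.ofReal_one, one_smul]

lemma exists_decomposition_lt_of_wmax_lt {x : Matrix (Fin n) (Fin n) X} {s : ℝ}
    (hs : Wmax OS n x < s) :
    ∃ (r : ℕ) (a : Matrix (Fin n) (Fin r) ℂ) (y : Matrix (Fin r) (Fin r) X)
      (b : Matrix (Fin r) (Fin n) ℂ), x = scalarMulRight (scalarMulLeft a y) b ∧ OS.O r y = 1 ∧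
        1 / 2 * ‖a * aᴴ + bᴴ * b‖ < s := by
  obtain ⟨r, a, y, b, hx, hy⟩ := exists_decomposition OS x
  obtain ⟨_, ⟨r, a, y, b, hx, hy, rfl⟩, hlt⟩ :=
    exists_lt_of_csInf_lt (by exact ⟨_, r, a, y, b, hx, hy, rfl⟩) hs
  exact ⟨r, a, y, b, hx, hy, hlt⟩

lemma le_mul_wmax_of_forall_decomposition {x : Matrix (Fin n) (Fin n) X} {f C : ℝ} (hC : 0 ≤ C)
    (h : ∀ (r : ℕ) (a : Matrix (Fin n) (Fin r) ℂ) (y : Matrix (Fin r) (Fin r) X)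
      (b : Matrix (Fin r) (Fin n) ℂ), x = scalarMulRight (scalarMulLeft a y) b → OS.O r y = 1 →
        f ≤ C * (1 / 2 * ‖a * aᴴ + bᴴ * b‖)) :
    f ≤ C * Wmax OS n x := by
  obtain ⟨r, a, y, b, hx, hy⟩ := exists_decomposition OS x
  rw [Wmax, ← smul_eq_mul, ← Real.sInf_smul_of_nonneg hC]
  refine le_csInf (Set.Nonempty.smul_set ⟨_, r, a, y, b, hx, hy, rfl⟩) ?_
  rintro _ ⟨_, ⟨r, a, y, b, hx, hy, rfl⟩, rfl⟩
  exact h r a y b hx hy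

lemma wmax_conj_le {m : ℕ} (α : Matrix (Fin n) (Fin m) ℂ) (x : Matrix (Fin m) (Fin m) X) :
    Wmax OS n (scalarMulRight (scalarMulLeft α x) αᴴ) ≤ ‖α‖ ^ 2 * Wmax OS m x := by
  refine le_mul_wmax_of_forall_decomposition OS (by positivity) fun r a y b hx hy => ?_
  calc Wmax OS n (scalarMulRight (scalarMulLeft α x) αᴴ)
      ≤ 1 / 2 * ‖(α * a) * (α * a)ᴴ + (b * αᴴ)ᴴ * (b * αᴴ)‖ :=
        wmax_le_of_decomposition OS (by rw [hx, scalarMul_sandwich]) hy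
    _ = 1 / 2 * ‖α * (a * aᴴ + bᴴ * b) * αᴴ‖ := by
        simp only [conjTranspose_mul, conjTranspose_conjTranspose, Matrix.mul_add,
          Matrix.add_mul, Matrix.mul_assoc]
    _ ≤ 1 / 2 * (‖α‖ * ‖a * aᴴ + bᴴ * b‖ * ‖αᴴ‖) := by
        gcongr
        exact (l2_opNorm_mul _ _).trans (by gcongr; exact l2_opNorm_mul _ _)
    _ = ‖α‖ ^ 2 * (1 / 2 * ‖a * aᴴ + bᴴ * b‖) := by
        rw [l2_opNorm_conjTranspose]
        ring

lemma wmax_smul_le (c : ℂ) (x : Matrix (Fin n) (Fin n) X) :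
    Wmax OS n (c • x) ≤ ‖c‖ * Wmax OS n x := by
  obtain ⟨d, hd⟩ := IsAlgClosed.exists_pow_nat_eq c two_pos
  refine le_mul_wmax_of_forall_decomposition OS (norm_nonneg c) fun r a y b hx hy => ?_
  have hcx : c • x = scalarMulRight (scalarMulLeft (d • a) y) (d • b) := by
    calc c • x = scalarMulRight (scalarMulLeft (d • 1) x) (d • 1) := by
          rw [scalarMulLeft_smul_one, scalarMulRight_smul_one, smul_smul, ← pow_two, hd]
      _ = _ := by simp [hx, scalarMul_sandwich]
  have hgram : (d • a) * (d • a)ᴴ + (d • b)ᴴ * (d • b) = (‖c‖ : ℂ) • (a * aᴴ + bᴴ * b) := by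
    have hdd : star d * d = ‖c‖ := by
      rw [← hd, norm_pow, Complex.ofReal_pow, ← Complex.conj_mul']
      rfl
    simp only [conjTranspose_smul, Matrix.smul_mul, Matrix.mul_smul, smul_smul,
      mul_comm d (star d), hdd, smul_add]
  calc Wmax OS n (c • x) ≤ 1 / 2 * ‖(d • a) * (d • a)ᴴ + (d • b)ᴴ * (d • b)‖ :=
        wmax_le_of_decomposition OS hcx hy
    _ = ‖c‖ * (1 / 2 * ‖a * aᴴ + bᴴ * b‖) := by
        rw [hgram, norm_smul, Complex.norm_real, Real.norm_of_nonneg (norm_nonneg c)]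
        ring

lemma wmax_smul (c : ℂ) (x : Matrix (Fin n) (Fin n) X) :
    Wmax OS n (c • x) = ‖c‖ * Wmax OS n x := by
  rcases eq_or_ne c 0 with rfl | hc
  · have h := wmax_smul_le OS 0 x
    rw [norm_zero, zero_mul] at h ⊢
    exact h.antisymm (wmax_nonneg OS _)
  · refine (wmax_smul_le OS c x).antisymm ?_
    have h := wmax_smul_le OS c⁻¹ (c • x)
    rw [inv_smul_smul₀ hc, norm_inv] at h
    exact (le_inv_mul_iff₀ (norm_pos_iff.2 hc)).1 h

lemma wmax_add_le (x x' : Matrix (Fin n) (Fin n) X) :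
    Wmax OS n (x + x') ≤ Wmax OS n x + Wmax OS n x' := by
  refine le_of_forall_pos_lt_add fun ε hε => ?_
  obtain ⟨r, a, y, b, rfl, hy, ht⟩ :=
    exists_decomposition_lt_of_wmax_lt OS (lt_add_of_pos_right (Wmax OS n x) (half_pos hε))
  obtain ⟨r', a', y', b', rfl, hy', ht'⟩ :=
    exists_decomposition_lt_of_wmax_lt OS (lt_add_of_pos_right (Wmax OS n x') (half_pos hε))
  calc _ ≤ 1 / 2 * ‖appendCols a a' * (appendCols a a')ᴴ +
          (appendRows b b')ᴴ * appendRows b b'‖ :=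
        wmax_le_of_decomposition OS (scalarMul_appendCols_blockDiag_appendRows ..).symm
          (by rw [OS.cond_OI, hy, hy', max_self])
    _ = 1 / 2 * ‖(a * aᴴ + bᴴ * b) + (a' * a'ᴴ + b'ᴴ * b')‖ := by
        rw [appendCols_conjTranspose, appendRows_conjTranspose, appendCols_mul_appendRows,
          appendCols_mul_appendRows, add_add_add_comm]
    _ ≤ 1 / 2 * ‖a * aᴴ + bᴴ * b‖ + 1 / 2 * ‖a' * a'ᴴ + b'ᴴ * b'‖ := by
        rw [← mul_add]
        gcongr
        exact norm_add_le _ _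
    _ < _ := by linarith

lemma wmax_blockDiag_le {m : ℕ} (x : Matrix (Fin m) (Fin m) X) (y : Matrix (Fin n) (Fin n) X) :
    Wmax OS (m + n) (blockDiag x y) ≤ max (Wmax OS m x) (Wmax OS n y) := by
  refine le_of_forall_gt fun s hs => ?_
  obtain ⟨r, a, z, b, rfl, hz, ht⟩ :=
    exists_decomposition_lt_of_wmax_lt OS ((le_max_left _ _).trans_lt hs)
  obtain ⟨r', a', z', b', rfl, hz', ht'⟩ :=
    exists_decomposition_lt_of_wmax_lt OS ((le_max_right _ _).trans_lt hs)
  calc _ ≤ 1 / 2 * ‖blockDiagRect a a' * (blockDiagRect a a')ᴴ +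
          (blockDiagRect b b')ᴴ * blockDiagRect b b'‖ :=
        wmax_le_of_decomposition OS (scalarMul_blockDiag ..).symm
          (by rw [OS.cond_OI, hz, hz', max_self])
    _ = 1 / 2 * ‖blockDiagRect (a * aᴴ + bᴴ * b) (a' * a'ᴴ + b'ᴴ * b')‖ := by
        rw [blockDiagRect_conjTranspose, blockDiagRect_conjTranspose, blockDiagRect_mul,
          blockDiagRect_mul, blockDiagRect_add]
    _ ≤ 1 / 2 * max ‖a * aᴴ + bᴴ * b‖ ‖a' * a'ᴴ + b'ᴴ * b'‖ := by
        gcongr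
        exact l2_opNorm_blockDiagRect_le _ _
    _ < s := by
        rw [mul_max_of_nonneg _ _ one_half_pos.le]
        exact max_lt ht ht'

lemma wmax_conj_le_of_mul_conjTranspose_eq_one {m : ℕ} {α : Matrix (Fin n) (Fin m) ℂ}
    (hα : α * αᴴ = 1) (x : Matrix (Fin m) (Fin m) X) :
    Wmax OS n (scalarMulRight (scalarMulLeft α x) αᴴ) ≤ Wmax OS m x := by
  refine (wmax_conj_le OS α x).trans (le_of_le_of_eq ?_ (one_mul _))
  gcongr
  · exact wmax_nonneg OS x
  · exact pow_le_one₀ (norm_nonneg α) (l2_opNorm_le_one_of_mul_conjTranspose_eq_one hα)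

lemma wmax_blockDiag {m : ℕ} (x : Matrix (Fin m) (Fin m) X) (y : Matrix (Fin n) (Fin n) X) :
    Wmax OS (m + n) (blockDiag x y) = max (Wmax OS m x) (Wmax OS n y) := by
  refine (wmax_blockDiag_le OS x y).antisymm (max_le ?_ ?_)
  · have h := wmax_conj_le_of_mul_conjTranspose_eq_one OS
      (α := appendCols (1 : Matrix (Fin m) (Fin m) ℂ) 0)
      (by simp [appendCols_conjTranspose, appendCols_mul_appendRows]) (blockDiag x y)
    simpa [appendCols_conjTranspose, scalarMul_appendCols_blockDiag_appendRows,
      scalarMul_one_one] using h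
  · have h := wmax_conj_le_of_mul_conjTranspose_eq_one OS
      (α := appendCols 0 (1 : Matrix (Fin n) (Fin n) ℂ))
      (by simp [appendCols_conjTranspose, appendCols_mul_appendRows]) (blockDiag x y)
    simpa [appendCols_conjTranspose, scalarMul_appendCols_blockDiag_appendRows,
      scalarMul_one_one] using h

lemma O_le_two_mul_wmax (x : Matrix (Fin n) (Fin n) X) : OS.O n x ≤ 2 * Wmax OS n x := by
  refine le_mul_wmax_of_forall_decomposition OS zero_le_two fun r a y b hx hy => ?_
  calc OS.O n x ≤ ‖a‖ * OS.O r y * ‖b‖ := hx ▸ OS.cond_OII r n a y b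
    _ = ‖a‖ * ‖b‖ := by rw [hy, mul_one]
    _ ≤ ‖a * aᴴ + bᴴ * b‖ := l2_opNorm_mul_l2_opNorm_le a b
    _ = 2 * (1 / 2 * ‖a * aᴴ + bᴴ * b‖) := by ring

lemma wmax_eq_zero_iff (x : Matrix (Fin n) (Fin n) X) : Wmax OS n x = 0 ↔ x = 0 := by
  constructor
  · intro h
    refine (OS.eq_zero_iff n x).1 (le_antisymm ?_ (OS.nonneg n x))
    simpa [h] using O_le_two_mul_wmax OS x
  · rintro rfl
    simpa using wmax_smul OS 0 (0 : Matrix (Fin n) (Fin n) X)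

end Wmax

/-- for an operator space `(X, 𝒪_n)`, `𝒲_max` is a norm on each `M_n(X)` and the
sequence `𝒲_max` satisfies the conditions (WI) and (WII). -/
theorem stmt_8 {X : Type u} [AddCommGroup X] [Module ℂ X] (OS : OSNorm X) :
    ∃ WN : NRNorm X, ∀ (n : ℕ) (x : Matrix (Fin n) (Fin n) X),
      WN.W n x = Wmax OS n x := by
  rcases subsingleton_or_nontrivial X with hX | hX
  · refine ⟨⟨fun _ _ => 0, fun _ _ => le_rfl, fun _ _ => iff_of_true rfl (Subsingleton.elim _ _),
      fun _ _ _ => by simp, fun _ _ _ => by simp, fun _ _ _ _ => by simp, fun _ _ _ _ => by simp⟩,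
      fun _ x => (wmax_eq_zero_of_subsingleton OS x).symm⟩
  · exact ⟨⟨Wmax OS, fun _ => wmax_nonneg OS, fun _ => wmax_eq_zero_iff OS,
      fun _ => wmax_add_le OS, fun _ => wmax_smul OS, fun _ _ => wmax_blockDiag OS,
      fun _ _ => wmax_conj_le OS⟩, fun _ _ => rfl⟩
end
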